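/- arXiv:math/0404494 — 4 statements merged into one kernel-verified Lean document; each statement's English description precedes it below -/
import Mathlib

section
/- For u > 0 and ε > 0, let H_u(a) = ∫_ℝ e^{iva} exp(−v²/(2u)) (1−f(v)) dv/√(2πu), where f is a smooth even cutoff equal to 1 on [−ε/2, ε/2] and supported in [−ε, ε]. Then for every m ∈ ℕ there exists C_m > 0 (depending on ε) such that sup_{a∈ℝ} |a|^m |H_u(a)| ≤ C_m · exp(−ε²/(8u)). -/
open MeasureTheory Real

namespace C9

noncomputable def phiC (f : ℝ → ℝ) : ℝ → ℂ := fun v => ((1 - f v : ℝ) : ℂ)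

noncomputable def Efn (u a v : ℝ) : ℂ :=
  Complex.exp (Complex.I * v * a + ((-v ^ 2 / (2 * u) : ℝ) : ℂ))

noncomputable def wfn (u a v : ℝ) : ℂ := ((-v / u : ℝ) : ℂ) + (a : ℂ) * Complex.I

noncomputable def trm (f : ℝ → ℝ) (n : ℕ) (u a : ℝ) (x : ℝ × ℕ × ℕ) (v : ℝ) : ℂ :=
  (x.1 : ℂ) * iteratedDeriv x.2.1 (phiC f) v * ((u : ℂ)⁻¹) ^ x.2.2 *
    ((wfn u a v)⁻¹) ^ (n + x.2.2)

noncomputable def Tsum (f : ℝ → ℝ) (n : ℕ) (u a : ℝ) (l : List (ℝ × ℕ × ℕ)) (v : ℝ) : ℂ :=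
  (l.map fun x => trm f n u a x v).sum

def stepL (n : ℕ) (l : List (ℝ × ℕ × ℕ)) : List (ℝ × ℕ × ℕ) :=
  l.flatMap fun x => [(x.1, x.2.1 + 1, x.2.2), ((n + x.2.2 + 1) * x.1, x.2.1, x.2.2 + 1)]

lemma wfn_ne_zero {a : ℝ} (ha : a ≠ 0) (u v : ℝ) : wfn u a v ≠ 0 := by
  intro h
  apply ha
  have := congrArg Complex.im h
  simpa [wfn] using this

lemma norm_wfn_inv_le_abs_inv (u a v : ℝ) (ha : a ≠ 0) : ‖(wfn u a v)⁻¹‖ ≤ |a|⁻¹ := by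
  rw [norm_inv]
  apply inv_anti₀ (abs_pos.mpr ha)
  calc |a| = |(wfn u a v).im| := by simp [wfn]
    _ ≤ ‖wfn u a v‖ := Complex.abs_im_le_norm _
    _ = ‖wfn u a v‖ := rfl

lemma norm_wfn_inv_le_div {u v : ℝ} (hu : 0 < u) (hv : 0 < |v|) (a : ℝ) :
    ‖(wfn u a v)⁻¹‖ ≤ u / |v| := by
  rw [norm_inv]
  rw [show u / |v| = (|v| / u)⁻¹ by rw [inv_div]]
  apply inv_anti₀ (by positivity)
  calc |v| / u = |(-v) / u| := by rw [abs_div, abs_neg, abs_of_pos hu]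
    _ = |(wfn u a v).re| := by simp [wfn]
    _ ≤ ‖wfn u a v‖ := Complex.abs_re_le_norm _
    _ = ‖wfn u a v‖ := rfl

lemma norm_Efn (u a v : ℝ) : ‖Efn u a v‖ = Real.exp (-v ^ 2 / (2 * u)) := by
  rw [Efn, Complex.norm_exp]
  congr 1
  simp only [Complex.add_re, Complex.mul_re, Complex.mul_im, Complex.I_re, Complex.I_im,
    Complex.ofReal_re, Complex.ofReal_im]
  ring

lemma hasDerivAt_Efn (u a v : ℝ) :
    HasDerivAt (Efn u a) (wfn u a v * Efn u a v) v := by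
  have h1 : HasDerivAt (fun v : ℝ => (v : ℂ)) 1 v := Complex.ofRealCLM.hasDerivAt
  have h2 : HasDerivAt (fun v : ℝ => Complex.I * (v : ℂ) * (a : ℂ))
      (Complex.I * 1 * a) v := (h1.const_mul Complex.I).mul_const _
  have h3 : HasDerivAt (fun v : ℝ => -v ^ 2 / (2 * u)) (-(2 * v) / (2 * u)) v := by
    simpa using ((hasDerivAt_pow 2 v).neg.div_const (2 * u))
  have h4 : HasDerivAt (fun v : ℝ => ((-v ^ 2 / (2 * u) : ℝ) : ℂ))
      ((-(2 * v) / (2 * u) : ℝ) : ℂ) v := h3.ofReal_comp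
  have h5 := (h2.fun_add h4).cexp
  convert h5 using 1
  · rfl
  rw [Efn, wfn]
  have : ((-(2 * v) / (2 * u) : ℝ) : ℂ) = ((-v / u : ℝ) : ℂ) := by
    rcases eq_or_ne u 0 with rfl | hu
    · norm_num
    · congr 1
      rw [neg_div, neg_div, mul_div_mul_left _ _ (two_ne_zero)]
  rw [this]
  ring

lemma integrable_gauss_mul {u : ℝ} (hu : 0 < u) {h : ℝ → ℂ} (hc : Continuous h)
    {C : ℝ} (hb : ∀ v, ‖h v‖ ≤ C) (a : ℝ) :
    Integrable fun v => Efn u a v * h v := by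
  have hg : Integrable (fun v : ℝ => C * Real.exp (-(2 * u)⁻¹ * v ^ 2)) :=
    (integrable_exp_neg_mul_sq (by positivity)).const_mul C
  apply hg.mono'
  · apply Continuous.aestronglyMeasurable
    apply Continuous.mul _ hc
    exact Complex.continuous_exp.comp (by continuity)
  · filter_upwards with v
    rw [norm_mul, norm_Efn]
    calc Real.exp (-v ^ 2 / (2 * u)) * ‖h v‖ ≤ Real.exp (-v ^ 2 / (2 * u)) * C := by
          apply mul_le_mul_of_nonneg_left (hb v) (Real.exp_nonneg _)
      _ = C * Real.exp (-(2 * u)⁻¹ * v ^ 2) := by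
          rw [mul_comm]; congr 1; ring_nf

lemma iteratedDeriv_zero_fun (j : ℕ) : iteratedDeriv j (fun _ : ℝ => (0 : ℂ)) = fun _ => 0 := by
  induction j with
  | zero => simp [iteratedDeriv_zero]
  | succ n ih =>
    rw [iteratedDeriv_succ', show deriv (fun _ : ℝ => (0:ℂ)) = fun _ => (0:ℂ) by
      funext x; simp]
    exact ih

lemma iteratedDeriv_const_fun (j : ℕ) (hj : j ≠ 0) (c : ℂ) :
    iteratedDeriv j (fun _ : ℝ => c) = fun _ => 0 := by
  obtain ⟨n, rfl⟩ := Nat.exists_eq_succ_of_ne_zero hj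
  rw [iteratedDeriv_succ', show deriv (fun _ : ℝ => c) = fun _ => (0:ℂ) by
      funext x; simp]
  exact iteratedDeriv_zero_fun n

section Phi
variable {ε : ℝ} {f : ℝ → ℝ}

lemma phiC_contDiff (hsmooth : ContDiff ℝ (⊤ : ℕ∞) f) : ContDiff ℝ (⊤ : ℕ∞) (phiC f) := by
  have : phiC f = fun v => Complex.ofRealCLM (1 - f v) := rfl
  rw [this]
  exact Complex.ofRealCLM.contDiff.comp (contDiff_const.sub hsmooth)

lemma phiC_eq_zero_inside (hone : ∀ v : ℝ, |v| ≤ ε / 2 → f v = 1) {v : ℝ}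
    (hv : |v| ≤ ε / 2) : phiC f v = 0 := by
  simp [phiC, hone v hv]

lemma iteratedDeriv_phiC_eq_zero_inside (hone : ∀ v : ℝ, |v| ≤ ε / 2 → f v = 1) (j : ℕ)
    {v : ℝ} (hv : |v| < ε / 2) : iteratedDeriv j (phiC f) v = 0 := by
  have hopen : IsOpen {x : ℝ | |x| < ε / 2} := isOpen_lt (by continuity) continuous_const
  have hev : phiC f =ᶠ[nhds v] fun _ => (0 : ℂ) := by
    filter_upwards [hopen.mem_nhds hv] with x hx
    exact phiC_eq_zero_inside hone (le_of_lt hx)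
  rw [hev.iteratedDeriv_eq, iteratedDeriv_zero_fun]

lemma phiC_norm_le_one (hrange : ∀ v, f v ∈ Set.Icc (0 : ℝ) 1) (v : ℝ) : ‖phiC f v‖ ≤ 1 := by
  rw [phiC, Complex.norm_real, Real.norm_eq_abs]
  obtain ⟨h0, h1⟩ := hrange v
  rw [abs_le]; constructor <;> linarith

lemma phi_iteratedDeriv_bound (hε : 0 < ε) (hsmooth : ContDiff ℝ (⊤ : ℕ∞) f)
    (hrange : ∀ v, f v ∈ Set.Icc (0 : ℝ) 1) (hzero : ∀ v : ℝ, ε ≤ |v| → f v = 0) (j : ℕ) :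
    ∃ M : ℝ, 0 ≤ M ∧ ∀ v, ‖iteratedDeriv j (phiC f) v‖ ≤ M := by
  rcases Nat.eq_zero_or_pos j with rfl | hj
  · exact ⟨1, zero_le_one, fun v => by rw [iteratedDeriv_zero]; exact phiC_norm_le_one hrange v⟩
  have hcont : Continuous (iteratedDeriv j (phiC f)) :=
    (phiC_contDiff hsmooth).continuous_iteratedDeriv j (by exact_mod_cast le_top)
  have hsupp : HasCompactSupport (iteratedDeriv j (phiC f)) := by
    apply HasCompactSupport.intro (isCompact_Icc (a := -ε) (b := ε))
    intro x hx
    have hx' : ε < |x| := by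
      rcases abs_cases x with ⟨h, _⟩ | ⟨h, _⟩ <;>
        (simp only [Set.mem_Icc, not_and_or, not_le] at hx; rcases hx with h2 | h2 <;> linarith)
    have hopen : IsOpen {y : ℝ | ε < |y|} := isOpen_lt continuous_const (by continuity)
    have hev : phiC f =ᶠ[nhds x] fun _ => (1 : ℂ) := by
      filter_upwards [hopen.mem_nhds hx'] with y hy
      simp [phiC, hzero y (le_of_lt hy)]
    rw [hev.iteratedDeriv_eq, iteratedDeriv_const_fun j (Nat.pos_iff_ne_zero.mp hj)]
  obtain ⟨C, hC⟩ := hcont.bounded_above_of_compact_support hsupp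
  exact ⟨max C 0, le_max_right _ _, fun v => le_trans (hC v) (le_max_left _ _)⟩

end Phi

section Terms
variable {ε : ℝ} {f : ℝ → ℝ} {u a : ℝ}

lemma continuous_wfn (u a : ℝ) : Continuous (wfn u a) := by
  unfold wfn; continuity

lemma hasDerivAt_iteratedDeriv_phiC (hsmooth : ContDiff ℝ (⊤ : ℕ∞) f) (j : ℕ) (v : ℝ) :
    HasDerivAt (iteratedDeriv j (phiC f)) (iteratedDeriv (j + 1) (phiC f) v) v := by
  have hdiff : Differentiable ℝ (iteratedDeriv j (phiC f)) :=
    (phiC_contDiff hsmooth).differentiable_iteratedDeriv j (by exact_mod_cast ENat.coe_lt_top j)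
  rw [iteratedDeriv_succ]
  exact (hdiff v).hasDerivAt

lemma trm_continuous (hsmooth : ContDiff ℝ (⊤ : ℕ∞) f) (ha : a ≠ 0) (n : ℕ) (x : ℝ × ℕ × ℕ) :
    Continuous (trm f n u a x) := by
  unfold trm
  apply Continuous.mul
  · apply Continuous.mul
    · exact continuous_const.mul ((phiC_contDiff hsmooth).continuous_iteratedDeriv _ (by exact_mod_cast le_top))
    · exact continuous_const
  · exact (((continuous_wfn u a).inv₀ (fun v => wfn_ne_zero ha u v)).pow _)

lemma Tsum_continuous (hsmooth : ContDiff ℝ (⊤ : ℕ∞) f) (ha : a ≠ 0) (n : ℕ) (l : List (ℝ × ℕ × ℕ)) :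
    Continuous (Tsum f n u a l) := by
  induction l with
  | nil => exact (continuous_const (y := (0:ℂ))).congr (fun v => by simp [Tsum])
  | cons x l ih =>
    have : Tsum f n u a (x :: l) = fun v => trm f n u a x v + Tsum f n u a l v := by
      funext v; simp [Tsum]
    rw [this]
    exact (trm_continuous hsmooth ha n x).add ih

lemma hasDerivAt_wfn (hu : 0 < u) (v : ℝ) : HasDerivAt (wfn u a) ((-(1 / u) : ℝ) : ℂ) v := by
  have hr : HasDerivAt (fun v : ℝ => -v / u) (-(1 / u)) v := by
    simpa [neg_div] using ((hasDerivAt_id v).div_const u).fun_neg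
  exact (hr.ofReal_comp).add_const _

lemma hasDerivAt_wfn_inv_pow (hu : 0 < u) (ha : a ≠ 0) (q : ℕ) (v : ℝ) :
    HasDerivAt (fun v => ((wfn u a v)⁻¹) ^ (q + 1))
      (((q : ℂ) + 1) * (u : ℂ)⁻¹ * ((wfn u a v)⁻¹) ^ (q + 2)) v := by
  have hw := hasDerivAt_wfn (a := a) hu v
  have hne := wfn_ne_zero ha u v
  have hz := hasDerivAt_zpow (-((q : ℤ) + 1)) (wfn u a v) (Or.inl hne)
  have h := HasDerivAt.comp (𝕜 := ℝ) (𝕜' := ℂ) v hz hw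
  have hfun : ((fun z : ℂ => z ^ (-((q : ℤ) + 1))) ∘ (wfn u a)) =
      fun v => ((wfn u a v)⁻¹) ^ (q + 1) := by
    funext y
    simp only [Function.comp_apply]
    rw [show (-((q : ℤ) + 1)) = -((q + 1 : ℕ) : ℤ) by push_cast; ring,
      zpow_neg, zpow_natCast, inv_pow]
  have hval : ((-((q : ℤ) + 1) : ℤ) : ℂ) * (wfn u a v) ^ (-((q : ℤ) + 1) - 1) *
        ((-(1 / u) : ℝ) : ℂ)
      = ((q : ℂ) + 1) * (u : ℂ)⁻¹ * ((wfn u a v)⁻¹) ^ (q + 2) := by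
    rw [show (-((q : ℤ) + 1) - 1) = -((q + 2 : ℕ) : ℤ) by push_cast; ring,
      zpow_neg, zpow_natCast, inv_pow]
    push_cast
    ring
  rw [hfun, hval] at h
  exact h

lemma trm_hasDerivAt (hsmooth : ContDiff ℝ (⊤ : ℕ∞) f) (hu : 0 < u) (ha : a ≠ 0) (n : ℕ)
    (x : ℝ × ℕ × ℕ) (v : ℝ) :
    HasDerivAt (fun v => trm f n u a x v * (wfn u a v)⁻¹)
      (trm f (n + 1) u a (x.1, x.2.1 + 1, x.2.2) v +
        trm f (n + 1) u a ((n + x.2.2 + 1) * x.1, x.2.1, x.2.2 + 1) v) v := by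
  obtain ⟨c, j, k⟩ := x
  have hfun : (fun v => trm f n u a (c, j, k) v * (wfn u a v)⁻¹) =
      fun v => ((c : ℂ) * ((u : ℂ)⁻¹) ^ k * iteratedDeriv j (phiC f) v) *
        ((wfn u a v)⁻¹) ^ (n + k + 1) := by
    funext v
    rw [trm, pow_succ]
    ring
  rw [hfun]
  have hA : HasDerivAt (fun v => (c : ℂ) * ((u : ℂ)⁻¹) ^ k * iteratedDeriv j (phiC f) v)
      ((c : ℂ) * ((u : ℂ)⁻¹) ^ k * iteratedDeriv (j + 1) (phiC f) v) v :=
    (hasDerivAt_iteratedDeriv_phiC hsmooth j v).const_mul _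
  have hB := hasDerivAt_wfn_inv_pow (a := a) hu ha (n + k) v
  have h := hA.fun_mul hB
  convert h using 1
  · rfl
  simp only [trm]
  rw [show n + 1 + k = n + k + 1 from by ring, show n + 1 + (k + 1) = n + k + 2 from by ring]
  push_cast
  ring

lemma Tsum_hasDerivAt (hsmooth : ContDiff ℝ (⊤ : ℕ∞) f) (hu : 0 < u) (ha : a ≠ 0) (n : ℕ)
    (l : List (ℝ × ℕ × ℕ)) (v : ℝ) :
    HasDerivAt (fun v => Tsum f n u a l v * (wfn u a v)⁻¹)
      (Tsum f (n + 1) u a (stepL n l) v) v := by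
  induction l with
  | nil =>
    have h1 : (fun v => Tsum f n u a [] v * (wfn u a v)⁻¹) = fun _ => (0 : ℂ) := by
      funext v; simp [Tsum]
    have h2 : Tsum f (n + 1) u a (stepL n []) v = 0 := by simp [Tsum, stepL]
    rw [h1, h2]
    exact hasDerivAt_const v 0
  | cons x l ih =>
    have h1 : (fun v => Tsum f n u a (x :: l) v * (wfn u a v)⁻¹) =
        fun v => (trm f n u a x v * (wfn u a v)⁻¹) + (Tsum f n u a l v * (wfn u a v)⁻¹) := by
      funext v; simp [Tsum]; ring
    rw [h1]
    have h := (trm_hasDerivAt hsmooth hu ha n x v).add ih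
    have h2 : Tsum f (n + 1) u a (stepL n (x :: l)) v =
        (trm f (n + 1) u a (x.1, x.2.1 + 1, x.2.2) v +
          trm f (n + 1) u a ((n + x.2.2 + 1) * x.1, x.2.1, x.2.2 + 1) v) +
        Tsum f (n + 1) u a (stepL n l) v := by
      simp [Tsum, stepL]
      ring
    rw [h2]
    exact h

lemma norm_trm_le (hu : 0 < u) (ha : a ≠ 0) (n : ℕ) (x : ℝ × ℕ × ℕ) {M : ℝ}
    (hM : ∀ w, ‖iteratedDeriv x.2.1 (phiC f) w‖ ≤ M) (v : ℝ) :
    ‖trm f n u a x v‖ ≤ |x.1| * M * (u⁻¹) ^ x.2.2 * (|a|⁻¹) ^ (n + x.2.2) := by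
  obtain ⟨c, j, k⟩ := x
  dsimp only at hM ⊢
  have hu' : ‖((u : ℂ))⁻¹‖ = u⁻¹ := by
    rw [norm_inv, Complex.norm_real, Real.norm_eq_abs, abs_of_pos hu]
  have h0 : ‖trm f n u a (c, j, k) v‖ = |c| * ‖iteratedDeriv j (phiC f) v‖ *
      (u⁻¹) ^ k * ‖(wfn u a v)⁻¹‖ ^ (n + k) := by
    rw [trm, norm_mul, norm_mul, norm_mul, norm_pow, norm_pow, hu',
      Complex.norm_real, Real.norm_eq_abs]
  rw [h0]
  have hM0 : 0 ≤ M := le_trans (norm_nonneg _) (hM v)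
  gcongr
  · exact hM v
  · exact norm_wfn_inv_le_abs_inv u a v ha

lemma norm_trm_le_sharp (hε : 0 < ε) (hu : 0 < u) (ha : a ≠ 0) (n : ℕ) (x : ℝ × ℕ × ℕ)
    {M : ℝ} (hM : ∀ w, ‖iteratedDeriv x.2.1 (phiC f) w‖ ≤ M) {v : ℝ} (hv : ε / 2 ≤ |v|) :
    ‖trm f n u a x v‖ ≤ |x.1| * M * (2 / ε) ^ x.2.2 * (|a|⁻¹) ^ n := by
  obtain ⟨c, j, k⟩ := x
  dsimp only at hM ⊢
  have hv0 : 0 < |v| := lt_of_lt_of_le (by positivity) hv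
  have hM0 : 0 ≤ M := le_trans (norm_nonneg _) (hM v)
  have hu' : ‖((u : ℂ))⁻¹‖ = u⁻¹ := by
    rw [norm_inv, Complex.norm_real, Real.norm_eq_abs, abs_of_pos hu]
  have h0 : ‖trm f n u a (c, j, k) v‖ = |c| * ‖iteratedDeriv j (phiC f) v‖ *
      ((u⁻¹) ^ k * (‖(wfn u a v)⁻¹‖ ^ n * ‖(wfn u a v)⁻¹‖ ^ k)) := by
    rw [trm, norm_mul, norm_mul, norm_mul, norm_pow, norm_pow, hu',
      Complex.norm_real, Real.norm_eq_abs, pow_add]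
    ring
  rw [h0]
  calc |c| * ‖iteratedDeriv j (phiC f) v‖ *
        ((u⁻¹) ^ k * (‖(wfn u a v)⁻¹‖ ^ n * ‖(wfn u a v)⁻¹‖ ^ k))
      ≤ |c| * M * ((u⁻¹) ^ k * ((|a|⁻¹) ^ n * (u / |v|) ^ k)) := by
        gcongr
        · exact hM v
        · exact norm_wfn_inv_le_abs_inv u a v ha
        · exact norm_wfn_inv_le_div hu hv0 a
    _ = |c| * M * ((|a|⁻¹) ^ n * (|v|⁻¹) ^ k) := by
        have huv : (u⁻¹) ^ k * (u / |v|) ^ k = (|v|⁻¹) ^ k := by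
          rw [← mul_pow]
          congr 1
          field_simp
        rw [show (u⁻¹) ^ k * ((|a|⁻¹) ^ n * (u / |v|) ^ k)
            = ((u⁻¹) ^ k * (u / |v|) ^ k) * (|a|⁻¹) ^ n by ring, huv]
        ring
    _ ≤ |c| * M * ((|a|⁻¹) ^ n * (2 / ε) ^ k) := by
        gcongr
        rw [show (2 / ε) = (ε / 2)⁻¹ by rw [inv_div]]
        exact inv_anti₀ (by positivity) hv
    _ = |c| * M * (2 / ε) ^ k * (|a|⁻¹) ^ n := by ring

lemma Tsum_zero_inside (hone : ∀ v : ℝ, |v| ≤ ε / 2 → f v = 1) (n : ℕ)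
    (l : List (ℝ × ℕ × ℕ)) {v : ℝ} (hv : |v| < ε / 2) (u a : ℝ) :
    Tsum f n u a l v = 0 := by
  apply List.sum_eq_zero
  intro y hy
  obtain ⟨x, _, rfl⟩ := List.mem_map.mp hy
  rw [trm, iteratedDeriv_phiC_eq_zero_inside hone _ hv]
  ring

lemma Tsum_bounded (hε : 0 < ε) (hsmooth : ContDiff ℝ (⊤ : ℕ∞) f)
    (hrange : ∀ v, f v ∈ Set.Icc (0 : ℝ) 1) (hzero : ∀ v : ℝ, ε ≤ |v| → f v = 0)
    (hu : 0 < u) (ha : a ≠ 0) (n : ℕ) (l : List (ℝ × ℕ × ℕ)) :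
    ∃ C, ∀ v, ‖Tsum f n u a l v‖ ≤ C := by
  induction l with
  | nil => exact ⟨0, fun v => by simp [Tsum]⟩
  | cons x l ih =>
    obtain ⟨C, hC⟩ := ih
    obtain ⟨M, _, hM⟩ := phi_iteratedDeriv_bound hε hsmooth hrange hzero x.2.1
    refine ⟨|x.1| * M * (u⁻¹) ^ x.2.2 * (|a|⁻¹) ^ (n + x.2.2) + C, fun v => ?_⟩
    have : Tsum f n u a (x :: l) v = trm f n u a x v + Tsum f n u a l v := by simp [Tsum]
    rw [this]
    exact le_trans (norm_add_le _ _) (add_le_add (norm_trm_le hu ha n x hM v) (hC v))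

lemma Tsum_bound_sharp (hε : 0 < ε) (hsmooth : ContDiff ℝ (⊤ : ℕ∞) f)
    (hrange : ∀ v, f v ∈ Set.Icc (0 : ℝ) 1) (hzero : ∀ v : ℝ, ε ≤ |v| → f v = 0)
    (n : ℕ) (l : List (ℝ × ℕ × ℕ)) :
    ∃ C, 0 ≤ C ∧ ∀ (u a v : ℝ), 0 < u → a ≠ 0 → ε / 2 ≤ |v| →
      ‖Tsum f n u a l v‖ ≤ C * (|a|⁻¹) ^ n := by
  induction l with
  | nil => exact ⟨0, le_refl 0, fun u a v _ _ _ => by simp [Tsum]⟩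
  | cons x l ih =>
    obtain ⟨C, hC0, hC⟩ := ih
    obtain ⟨M, hM0, hM⟩ := phi_iteratedDeriv_bound hε hsmooth hrange hzero x.2.1
    refine ⟨|x.1| * M * (2 / ε) ^ x.2.2 + C, by positivity, fun u a v hu ha hv => ?_⟩
    have h1 : Tsum f n u a (x :: l) v = trm f n u a x v + Tsum f n u a l v := by simp [Tsum]
    rw [h1, add_mul]
    exact le_trans (norm_add_le _ _)
      (add_le_add (norm_trm_le_sharp hε hu ha n x hM hv) (hC u a v hu ha hv))

lemma ibp_step (hε : 0 < ε) (hsmooth : ContDiff ℝ (⊤ : ℕ∞) f)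
    (hrange : ∀ v, f v ∈ Set.Icc (0 : ℝ) 1) (hzero : ∀ v : ℝ, ε ≤ |v| → f v = 0)
    (hu : 0 < u) (ha : a ≠ 0) (n : ℕ) (l : List (ℝ × ℕ × ℕ)) :
    (∫ v, Efn u a v * Tsum f n u a l v) =
      -∫ v, Efn u a v * Tsum f (n + 1) u a (stepL n l) v := by
  obtain ⟨C, hC⟩ := Tsum_bounded hε hsmooth hrange hzero hu ha n l
  obtain ⟨C', hC'⟩ := Tsum_bounded hε hsmooth hrange hzero hu ha (n + 1) (stepL n l)
  have hcontT : Continuous (Tsum f n u a l) := Tsum_continuous hsmooth ha n l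
  have hcontD : Continuous (Tsum f (n + 1) u a (stepL n l)) :=
    Tsum_continuous hsmooth ha (n + 1) (stepL n l)
  have hET : Integrable (fun v => Efn u a v * Tsum f n u a l v) :=
    integrable_gauss_mul hu hcontT hC a
  have hED : Integrable (fun v => Efn u a v * Tsum f (n + 1) u a (stepL n l) v) :=
    integrable_gauss_mul hu hcontD hC' a
  have hF : Integrable (fun v => Efn u a v * (Tsum f n u a l v * (wfn u a v)⁻¹)) := by
    apply integrable_gauss_mul hu (hcontT.mul (((continuous_wfn u a).inv₀
      (fun v => wfn_ne_zero ha u v))))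
      (C := C * |a|⁻¹) _ a
    intro v
    rw [Pi.mul_apply, Pi.inv_apply, norm_mul]
    exact mul_le_mul (hC v) (norm_wfn_inv_le_abs_inv u a v ha) (norm_nonneg _)
      (le_trans (norm_nonneg _) (hC v))
  have hderiv : ∀ v, HasDerivAt (fun v => Efn u a v * (Tsum f n u a l v * (wfn u a v)⁻¹))
      (Efn u a v * Tsum f n u a l v + Efn u a v * Tsum f (n + 1) u a (stepL n l) v) v := by
    intro v
    have h := (hasDerivAt_Efn u a v).fun_mul (Tsum_hasDerivAt hsmooth hu ha n l v)
    convert h using 1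
    · rfl
    have hne := wfn_ne_zero ha u v
    field_simp
  have hint : Integrable (fun v => Efn u a v * Tsum f n u a l v +
      Efn u a v * Tsum f (n + 1) u a (stepL n l) v) := hET.add hED
  have h0 := integral_eq_zero_of_hasDerivAt_of_integrable hderiv hint hF
  rw [integral_add hET hED] at h0
  linear_combination h0

lemma ident (hε : 0 < ε) (hsmooth : ContDiff ℝ (⊤ : ℕ∞) f)
    (hrange : ∀ v, f v ∈ Set.Icc (0 : ℝ) 1) (hzero : ∀ v : ℝ, ε ≤ |v| → f v = 0) (m : ℕ) :
    ∃ l : List (ℝ × ℕ × ℕ), ∀ (u a : ℝ), 0 < u → a ≠ 0 →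
      (∫ v, Efn u a v * phiC f v) =
        (-1 : ℂ) ^ m * ∫ v, Efn u a v * Tsum f m u a l v := by
  induction m with
  | zero =>
    refine ⟨[(1, 0, 0)], fun u a hu ha => ?_⟩
    have : ∀ v, Tsum f 0 u a [(1, 0, 0)] v = phiC f v := by
      intro v; simp [Tsum, trm]
    simp only [pow_zero, one_mul]
    congr 1
    funext v
    rw [this]
  | succ m ih =>
    obtain ⟨l, hl⟩ := ih
    refine ⟨stepL m l, fun u a hu ha => ?_⟩
    rw [hl u a hu ha, ibp_step hε hsmooth hrange hzero hu ha m l]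
    rw [pow_succ]
    ring

end Terms

section FinalEst
variable {ε : ℝ} {f : ℝ → ℝ} {u a : ℝ}

lemma integrable_gauss_shift (hu : 0 < u) (c : ℝ) :
    Integrable (fun v : ℝ => Real.exp (-(v - c) ^ 2 / (2 * u))) := by
  have h := (integrable_exp_neg_mul_sq (b := (2 * u)⁻¹) (by positivity)).comp_sub_right c
  convert h using 2 with v
  rw [neg_div, div_eq_mul_inv]
  ring_nf

lemma integral_gauss_shift (hu : 0 < u) (c : ℝ) :
    (∫ v : ℝ, Real.exp (-(v - c) ^ 2 / (2 * u))) = Real.sqrt (2 * π * u) := by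
  have h1 : (∫ v : ℝ, Real.exp (-(v - c) ^ 2 / (2 * u)))
      = ∫ v : ℝ, Real.exp (-v ^ 2 / (2 * u)) :=
    integral_sub_right_eq_self (fun v => Real.exp (-v ^ 2 / (2 * u))) c
  rw [h1]
  have h2 : (∫ v : ℝ, Real.exp (-v ^ 2 / (2 * u)))
      = ∫ v : ℝ, Real.exp (-(2 * u)⁻¹ * v ^ 2) := by
    congr 1; funext v; congr 1; rw [neg_div, div_eq_mul_inv]; ring
  rw [h2, integral_gaussian]
  congr 1
  field_simp

lemma final_est (hε : 0 < ε) (hu : 0 < u) {h : ℝ → ℂ} (hcont : Continuous h) {C : ℝ}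
    (hC : 0 ≤ C) (hbound : ∀ v, ε / 2 ≤ |v| → ‖h v‖ ≤ C)
    (hvan : ∀ v : ℝ, |v| < ε / 2 → h v = 0) (a : ℝ) :
    ‖∫ v, Efn u a v * h v‖ ≤
      2 * C * Real.exp (-ε ^ 2 / (8 * u)) * Real.sqrt (2 * π * u) := by
  have hball : ∀ v, ‖h v‖ ≤ C := by
    intro v
    rcases lt_or_ge (|v|) (ε / 2) with hv | hv
    · rw [hvan v hv]; simpa using hC
    · exact hbound v hv
  have hint : Integrable (fun v => Efn u a v * h v) := integrable_gauss_mul hu hcont hball a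
  set G : ℝ → ℝ := fun v => C * Real.exp (-ε ^ 2 / (8 * u)) *
    (Real.exp (-(v - ε / 2) ^ 2 / (2 * u)) + Real.exp (-(v + ε / 2) ^ 2 / (2 * u))) with hG
  have hGint : Integrable G := by
    apply Integrable.const_mul
    have h2 : Integrable (fun v : ℝ => Real.exp (-(v + ε / 2) ^ 2 / (2 * u))) := by
      have := integrable_gauss_shift hu (-(ε / 2))
      simpa [sub_neg_eq_add] using this
    exact (integrable_gauss_shift hu (ε / 2)).add h2
  have hptwise : ∀ v, ‖Efn u a v * h v‖ ≤ G v := by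
    intro v
    rcases lt_or_ge (|v|) (ε / 2) with hv | hv
    · rw [hvan v hv, mul_zero, norm_zero, hG]
      positivity
    · rw [norm_mul, norm_Efn]
      have key : Real.exp (-v ^ 2 / (2 * u)) ≤ Real.exp (-ε ^ 2 / (8 * u)) *
          (Real.exp (-(v - ε / 2) ^ 2 / (2 * u)) + Real.exp (-(v + ε / 2) ^ 2 / (2 * u))) := by
        rcases le_or_gt 0 v with hv0 | hv0
        · have hvε : ε / 2 ≤ v := by rwa [abs_of_nonneg hv0] at hv
          have e1 : -v ^ 2 / (2 * u) ≤ -ε ^ 2 / (8 * u) + -(v - ε / 2) ^ 2 / (2 * u) := by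
            rw [show -v ^ 2 / (2 * u) = -(4 * v ^ 2) / (8 * u) by ring,
              show -ε ^ 2 / (8 * u) + -(v - ε / 2) ^ 2 / (2 * u)
                = (-ε ^ 2 + -(4 * (v - ε / 2) ^ 2)) / (8 * u) by ring]
            apply div_le_div_of_nonneg_right ?_ (by positivity)
            nlinarith [mul_le_mul_of_nonneg_left hvε (le_of_lt hε)]
          calc Real.exp (-v ^ 2 / (2 * u))
              ≤ Real.exp (-ε ^ 2 / (8 * u) + -(v - ε / 2) ^ 2 / (2 * u)) := Real.exp_le_exp.mpr e1
            _ = Real.exp (-ε ^ 2 / (8 * u)) * Real.exp (-(v - ε / 2) ^ 2 / (2 * u)) :=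
                Real.exp_add _ _
            _ ≤ _ := by
                rw [mul_add]
                nlinarith [Real.exp_pos (-(v + ε / 2) ^ 2 / (2 * u)),
                  Real.exp_pos (-ε ^ 2 / (8 * u))]
        · have hvε : v ≤ -(ε / 2) := by
            rw [abs_of_neg hv0] at hv; linarith
          have e1 : -v ^ 2 / (2 * u) ≤ -ε ^ 2 / (8 * u) + -(v + ε / 2) ^ 2 / (2 * u) := by
            rw [show -v ^ 2 / (2 * u) = -(4 * v ^ 2) / (8 * u) by ring,
              show -ε ^ 2 / (8 * u) + -(v + ε / 2) ^ 2 / (2 * u)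
                = (-ε ^ 2 + -(4 * (v + ε / 2) ^ 2)) / (8 * u) by ring]
            apply div_le_div_of_nonneg_right ?_ (by positivity)
            nlinarith [mul_le_mul_of_nonneg_left hvε (le_of_lt hε)]
          calc Real.exp (-v ^ 2 / (2 * u))
              ≤ Real.exp (-ε ^ 2 / (8 * u) + -(v + ε / 2) ^ 2 / (2 * u)) := Real.exp_le_exp.mpr e1
            _ = Real.exp (-ε ^ 2 / (8 * u)) * Real.exp (-(v + ε / 2) ^ 2 / (2 * u)) :=
                Real.exp_add _ _
            _ ≤ _ := by
                rw [mul_add]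
                nlinarith [Real.exp_pos (-(v - ε / 2) ^ 2 / (2 * u)),
                  Real.exp_pos (-ε ^ 2 / (8 * u))]
      calc Real.exp (-v ^ 2 / (2 * u)) * ‖h v‖
          ≤ Real.exp (-v ^ 2 / (2 * u)) * C :=
            mul_le_mul_of_nonneg_left (hball v) (Real.exp_nonneg _)
        _ ≤ (Real.exp (-ε ^ 2 / (8 * u)) *
              (Real.exp (-(v - ε / 2) ^ 2 / (2 * u)) +
                Real.exp (-(v + ε / 2) ^ 2 / (2 * u)))) * C := by
            apply mul_le_mul_of_nonneg_right key hC
        _ = G v := by rw [hG]; ring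
  calc ‖∫ v, Efn u a v * h v‖ ≤ ∫ v, ‖Efn u a v * h v‖ := norm_integral_le_integral_norm _
    _ ≤ ∫ v, G v := integral_mono hint.norm hGint hptwise
    _ = C * Real.exp (-ε ^ 2 / (8 * u)) * (Real.sqrt (2 * π * u) + Real.sqrt (2 * π * u)) := by
        simp only [hG]
        rw [integral_const_mul, integral_add (integrable_gauss_shift hu (ε / 2))
          (by simpa [sub_neg_eq_add] using integrable_gauss_shift hu (-(ε / 2))),
          integral_gauss_shift hu (ε / 2)]
        congr 2
        have := integral_gauss_shift hu (-(ε / 2))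
        simpa [sub_neg_eq_add] using this
    _ = 2 * C * Real.exp (-ε ^ 2 / (8 * u)) * Real.sqrt (2 * π * u) := by ring

end FinalEst

end C9

open C9 in
/-- Estimate (c9) of the paper: for the cutoff `f` and
`H_u(a) = ∫ e^{iva} exp(−v²/(2u)) (1−f(v)) dv/√(2πu)`, for every `m` there is `C_m > 0`
(depending on `ε`) with `sup_a |a|^m |H_u(a)| ≤ C_m exp(−ε²/(8u))`, uniformly in `u > 0`. -/
theorem stmt_2 (ε : ℝ) (hε : 0 < ε) (f : ℝ → ℝ)
    (hsmooth : ContDiff ℝ (⊤ : ℕ∞) f)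
    (heven : ∀ v, f (-v) = f v)
    (hrange : ∀ v, f v ∈ Set.Icc (0 : ℝ) 1)
    (hone : ∀ v : ℝ, |v| ≤ ε / 2 → f v = 1)
    (hzero : ∀ v : ℝ, ε ≤ |v| → f v = 0)
    (H : ℝ → ℝ → ℂ)
    (hH : ∀ u : ℝ, 0 < u → ∀ a : ℝ, H u a =
      ∫ v : ℝ, Complex.exp (Complex.I * (v : ℂ) * (a : ℂ)) *
        ((Real.exp (-v ^ 2 / (2 * u)) * (1 - f v) / Real.sqrt (2 * π * u) : ℝ) : ℂ)) :
    ∀ m : ℕ, ∃ Cm > (0 : ℝ), ∀ u : ℝ, 0 < u → ∀ a : ℝ,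
      |a| ^ m * ‖H u a‖ ≤ Cm * Real.exp (-ε ^ 2 / (8 * u)) := by
  intro m
  obtain ⟨l, hl⟩ := ident hε hsmooth hrange hzero m
  obtain ⟨C, hC0, hCb⟩ := Tsum_bound_sharp hε hsmooth hrange hzero m l
  refine ⟨2 * C + 3, by positivity, ?_⟩
  intro u hu a
  have hπ : (0 : ℝ) < π := Real.pi_pos
  have hsq : 0 < Real.sqrt (2 * π * u) := Real.sqrt_pos.mpr (by positivity)
  have hHrw : H u a = ((Real.sqrt (2 * π * u) : ℝ) : ℂ)⁻¹ * ∫ v, Efn u a v * phiC f v := by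
    rw [hH u hu a, ← integral_const_mul]
    congr 1
    funext v
    rw [Efn, Complex.exp_add, phiC]
    rw [show ((Real.exp (-v ^ 2 / (2 * u)) * (1 - f v) / Real.sqrt (2 * π * u) : ℝ) : ℂ)
        = ((Real.exp (-v ^ 2 / (2 * u)) : ℝ) : ℂ) * ((1 - f v : ℝ) : ℂ) *
          ((Real.sqrt (2 * π * u) : ℝ) : ℂ)⁻¹ by push_cast; ring]
    rw [Complex.ofReal_exp]
    ring
  have hnormH : ‖H u a‖ = (Real.sqrt (2 * π * u))⁻¹ * ‖∫ v, Efn u a v * phiC f v‖ := by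
    rw [hHrw, norm_mul, norm_inv, Complex.norm_real, Real.norm_eq_abs,
      abs_of_pos hsq]
  rcases eq_or_ne a 0 with rfl | ha
  · -- a = 0
    have hb : ‖∫ v, Efn u 0 v * phiC f v‖ ≤
        2 * 1 * Real.exp (-ε ^ 2 / (8 * u)) * Real.sqrt (2 * π * u) := by
      apply final_est hε hu _ zero_le_one _ _ 0
      · exact (Complex.ofRealCLM.continuous).comp ((continuous_const.sub
          (hsmooth.continuous)))
      · intro v _; exact phiC_norm_le_one hrange v
      · intro v hv; exact phiC_eq_zero_inside hone (le_of_lt hv)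
    have h1 : |(0 : ℝ)| ^ m ≤ 1 := by
      rw [abs_zero]
      exact pow_le_one₀ (le_refl 0) zero_le_one
    calc |(0 : ℝ)| ^ m * ‖H u 0‖ ≤ 1 * ‖H u 0‖ :=
          mul_le_mul_of_nonneg_right h1 (norm_nonneg _)
      _ = (Real.sqrt (2 * π * u))⁻¹ * ‖∫ v, Efn u 0 v * phiC f v‖ := by rw [one_mul, hnormH]
      _ ≤ (Real.sqrt (2 * π * u))⁻¹ *
            (2 * 1 * Real.exp (-ε ^ 2 / (8 * u)) * Real.sqrt (2 * π * u)) := by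
          apply mul_le_mul_of_nonneg_left hb (by positivity)
      _ = 2 * Real.exp (-ε ^ 2 / (8 * u)) := by
          field_simp
      _ ≤ (2 * C + 3) * Real.exp (-ε ^ 2 / (8 * u)) := by
          apply mul_le_mul_of_nonneg_right _ (Real.exp_nonneg _)
          linarith
  · -- a ≠ 0
    have hb : ‖∫ v, Efn u a v * Tsum f m u a l v‖ ≤
        2 * (C * (|a|⁻¹) ^ m) * Real.exp (-ε ^ 2 / (8 * u)) * Real.sqrt (2 * π * u) := by
      apply final_est hε hu (Tsum_continuous hsmooth ha m l) (by positivity) _ _ a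
      · intro v hv; exact hCb u a v hu ha hv
      · intro v hv; exact Tsum_zero_inside hone m l hv u a
    have hnint : ‖∫ v, Efn u a v * phiC f v‖ = ‖∫ v, Efn u a v * Tsum f m u a l v‖ := by
      rw [hl u a hu ha, norm_mul, norm_pow]
      simp
    have hcancel : |a| ^ m * (|a|⁻¹) ^ m = 1 := by
      rw [← mul_pow, mul_inv_cancel₀ (abs_ne_zero.mpr ha), one_pow]
    calc |a| ^ m * ‖H u a‖
        = |a| ^ m * ((Real.sqrt (2 * π * u))⁻¹ * ‖∫ v, Efn u a v * Tsum f m u a l v‖) := by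
          rw [hnormH, hnint]
      _ ≤ |a| ^ m * ((Real.sqrt (2 * π * u))⁻¹ *
            (2 * (C * (|a|⁻¹) ^ m) * Real.exp (-ε ^ 2 / (8 * u)) * Real.sqrt (2 * π * u))) := by
          apply mul_le_mul_of_nonneg_left _ (by positivity)
          apply mul_le_mul_of_nonneg_left hb (by positivity)
      _ = 2 * C * Real.exp (-ε ^ 2 / (8 * u)) * (|a| ^ m * (|a|⁻¹) ^ m) *
            ((Real.sqrt (2 * π * u))⁻¹ * Real.sqrt (2 * π * u)) := by ring
      _ = 2 * C * Real.exp (-ε ^ 2 / (8 * u)) := by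
          rw [hcancel, inv_mul_cancel₀ (ne_of_gt hsq)]
          ring
      _ ≤ (2 * C + 3) * Real.exp (-ε ^ 2 / (8 * u)) := by
          apply mul_le_mul_of_nonneg_right _ (Real.exp_nonneg _)
          linarith
end

section
/- Let R : ℝ^{2n} × ℝ^{2n} → ℝ be a bilinear form that is antisymmetric in the sense ⟨R(x,y)z, w⟩ = −⟨R(y,x)z,w⟩ and satisfies the symmetries of a Riemannian curvature tensor (antisymmetry in the first two and last two slots, pair symmetry, first Bianchi identity). Let J be an orthogonal complex structure on ℝ^{2n} (J² = −1, J orthogonal) and suppose R is J-invariant of type (1,1): R(Jx, Jy) = R(x,y). Then for the standard Gaussian measure, ∫_{ℝ^{2n}} ⟨R(Z, JZ)Z, JZ⟩ exp(−|Z|²/2) dZ = −4 (2π)^n · r, where r = −Σ_{j,k} ⟨R(e_j, e_k)e_j, e_k⟩ is the scalar curvature contraction and {e_j} is an orthonormal basis. -/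
/-!
Expanding the integrand in the coordinates of `Z`, Isserlis' (Wick's) formula for the fourth
moments of a standard Gaussian turns the integral into `(2π)^n` times the sum of the three
pairings `∑ R(eᵢ, Jeᵢ, eₖ, Jeₖ) + ∑ R(eᵢ, Jeₖ, eᵢ, Jeₖ) + ∑ R(eᵢ, Jeₖ, eₖ, Jeᵢ)`.
Since `J` is orthogonal, the middle pairing is the full contraction `s = ∑ R(eᵢ, eₖ, eᵢ, eₖ)`.
The `(1,1)`-condition together with `J² = -1` gives `R(Jx, y, ·, ·) = -R(x, Jy, ·, ·)`; combined
with the first Bianchi identity this shows that the first pairing equals `2s` and the last one `s`.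
-/

open MeasureTheory Finset Real Matrix
open scoped Nat

lemma integrable_pow_mul_exp_neg_sq_div_two (k : ℕ) :
    Integrable fun t : ℝ => t ^ k * exp (-t ^ 2 / 2) := by
  have h := integrable_rpow_mul_exp_neg_mul_sq one_half_pos
    (neg_one_lt_zero.trans_le (Nat.cast_nonneg k))
  simp only [rpow_natCast] at h
  convert h using 4 with t
  ring

lemma integral_pow_mul_exp_neg_sq_div_two_of_odd {k : ℕ} (hk : Odd k) :
    ∫ t : ℝ, t ^ k * exp (-t ^ 2 / 2) = 0 := by
  have h := integral_neg_eq_self (fun t : ℝ => t ^ k * exp (-t ^ 2 / 2)) volume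
  simp only [hk.neg_pow, neg_sq, neg_mul, integral_neg] at h
  linarith

lemma integral_pow_two_mul_mul_exp_neg_sq_div_two (j : ℕ) :
    ∫ t : ℝ, t ^ (2 * j) * exp (-t ^ 2 / 2) = (2 * j - 1 : ℕ)‼ * √(2 * π) := by
  set f : ℝ → ℝ := fun u => u ^ ((2 * j : ℕ) : ℝ) * exp (-(1 / 2) * u ^ (2 : ℝ))
  have hf : ∀ t, t ^ (2 * j) * exp (-t ^ 2 / 2) = f |t| := fun t => by
    simp only [f, rpow_natCast, rpow_two, sq_abs, (even_two_mul j).pow_abs]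
    ring_nf
  have hpow : (1 / 2 : ℝ) ^ (-((2 * j : ℕ) + 1 : ℝ) / 2) = 2 ^ j * √2 := by
    rw [one_div, inv_rpow zero_le_two, ← rpow_neg zero_le_two,
      show -(-((2 * j : ℕ) + 1 : ℝ) / 2) = j + 1 / 2 by push_cast; ring, rpow_add two_pos,
      rpow_natCast, ← sqrt_eq_rpow]
  rw [integral_congr_ae (.of_forall hf), integral_comp_abs (f := f),
    integral_rpow_mul_exp_neg_mul_rpow two_pos (neg_one_lt_zero.trans_le (Nat.cast_nonneg _))
      one_half_pos, hpow,
    show ((2 * j : ℕ) + 1 : ℝ) / 2 = j + 1 / 2 by push_cast; ring, Gamma_nat_add_half,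
    sqrt_mul zero_le_two]
  field_simp

/-- `E[Xᵏ]` for a standard normal `X`; at `k = 0` the truncated `k - 1` gives `0‼ = 1`. -/
noncomputable def stdGaussianMoment (k : ℕ) : ℝ := if Even k then (k - 1 : ℕ)‼ else 0

lemma integral_pow_mul_exp_neg_sq_div_two (k : ℕ) :
    ∫ t : ℝ, t ^ k * exp (-t ^ 2 / 2) = stdGaussianMoment k * √(2 * π) := by
  rcases k.even_or_odd with ⟨j, rfl⟩ | hk
  · rw [← two_mul, integral_pow_two_mul_mul_exp_neg_sq_div_two, stdGaussianMoment,
      if_pos (even_two_mul j)]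
  · rw [integral_pow_mul_exp_neg_sq_div_two_of_odd hk, stdGaussianMoment,
      if_neg (Nat.not_even_iff_odd.mpr hk), zero_mul]

lemma integral_sum_sum_sum_sum {α β E : Type*} [MeasurableSpace α] {μ : Measure α}
    [NormedAddCommGroup E] [NormedSpace ℝ E] [Fintype β] {F : β → β → β → β → α → E}
    (hF : ∀ a b c d, Integrable (F a b c d) μ) :
    ∫ z, ∑ a, ∑ b, ∑ c, ∑ d, F a b c d z ∂μ = ∑ a, ∑ b, ∑ c, ∑ d, ∫ z, F a b c d z ∂μ := by
  simp only [← Fintype.sum_prod_type']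
  exact integral_finsetSum _ fun p _ => hF _ _ _ _

section Isserlis

variable {ι : Type*} [Fintype ι]

lemma exp_neg_norm_sq_div_two (Z : EuclideanSpace ℝ ι) :
    exp (-‖Z‖ ^ 2 / 2) = ∏ i, exp (-Z i ^ 2 / 2) := by
  rw [EuclideanSpace.real_norm_sq_eq, ← exp_sum, ← sum_neg_distrib, sum_div]

lemma integrable_prod_pow_mul_exp_neg_norm_sq_div_two (k : ι → ℕ) :
    Integrable fun Z : EuclideanSpace ℝ ι => (∏ i, Z i ^ k i) * exp (-‖Z‖ ^ 2 / 2) := by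
  rw [← (PiLp.volume_preserving_toLp ι).integrable_comp_emb
    (MeasurableEquiv.toLp 2 _).measurableEmbedding]
  simp only [Function.comp_def, exp_neg_norm_sq_div_two, ← prod_mul_distrib]
  exact Integrable.fintype_prod (f := fun i t => t ^ k i * exp (-t ^ 2 / 2))
    fun i => integrable_pow_mul_exp_neg_sq_div_two (k i)

lemma integral_prod_pow_mul_exp_neg_norm_sq_div_two (k : ι → ℕ) :
    ∫ Z : EuclideanSpace ℝ ι, (∏ i, Z i ^ k i) * exp (-‖Z‖ ^ 2 / 2) =
      √(2 * π) ^ Fintype.card ι * ∏ i, stdGaussianMoment (k i) := by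
  rw [← (PiLp.volume_preserving_toLp ι).integral_comp
    (MeasurableEquiv.toLp 2 _).measurableEmbedding]
  simp only [exp_neg_norm_sq_div_two, ← prod_mul_distrib]
  rw [integral_fintype_prod_volume_eq_prod (f := fun i t => t ^ k i * exp (-t ^ 2 / 2))]
  simp only [integral_pow_mul_exp_neg_sq_div_two, prod_mul_distrib, prod_const, card_univ]
  exact mul_comm _ _

lemma dotProduct_mul_mul_mul_eq_sum (u v w x y : ι → ℝ) :
    (u ⬝ᵥ y) * (v ⬝ᵥ y) * (w ⬝ᵥ y) * (x ⬝ᵥ y) =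
      ∑ a, ∑ b, ∑ c, ∑ d, u a * v b * w c * x d * (y a * y b * y c * y d) := by
  have h (a b c d : ι) : u a * v b * w c * x d * (y a * y b * y c * y d) =
      u a * y a * (v b * y b) * (w c * y c) * (x d * y d) := by ring
  simp only [h, ← mul_sum, ← sum_mul, dotProduct]

variable [DecidableEq ι]

lemma mul_mul_mul_eq_prod_pow_count {M : Type*} [CommMonoid M] (x : ι → M) (a b c d : ι) :
    x a * x b * x c * x d = ∏ i, x i ^ Multiset.count i {a, b, c, d} := by
  rw [← prod_subset (subset_univ (Multiset.toFinset {a, b, c, d})) fun i _ hi => by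
    rw [Multiset.count_eq_zero_of_notMem (Multiset.mem_toFinset.not.mp hi), pow_zero],
    ← prod_multiset_map_count]
  simp [mul_assoc]

lemma prod_stdGaussianMoment_count (a b c d : ι) :
    ∏ i, stdGaussianMoment (Multiset.count i {a, b, c, d}) =
      (if a = b then 1 else 0) * (if c = d then 1 else 0) +
      (if a = c then 1 else 0) * (if b = d then 1 else 0) +
      (if a = d then 1 else 0) * (if b = c then 1 else 0) := by
  have h0 : stdGaussianMoment 0 = 1 := by simp [stdGaussianMoment]
  have h1 : stdGaussianMoment 1 = 0 := by simp [stdGaussianMoment]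
  have h2 : stdGaussianMoment 2 = 1 := by simp [stdGaussianMoment]
  have h3 : stdGaussianMoment 3 = 0 := by simp [stdGaussianMoment]; decide
  have h4 : stdGaussianMoment 4 = 3 := by simp [stdGaussianMoment]; decide
  rw [← prod_subset (subset_univ ({a, b, c, d} : Finset ι)) fun i _ hi => by simp_all]
  by_cases hab : a = b <;> by_cases hac : a = c <;> by_cases had : a = d <;>
    by_cases hbc : b = c <;> by_cases hbd : b = d <;> by_cases hcd : c = d <;>
    simp_all [prod_insert, Multiset.count_cons, eq_comm, one_add_one_eq_two,
      two_add_one_eq_three]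

lemma integral_mul_mul_mul_mul_exp_neg_norm_sq_div_two (a b c d : ι) :
    ∫ Z : EuclideanSpace ℝ ι, Z a * Z b * Z c * Z d * exp (-‖Z‖ ^ 2 / 2) =
      √(2 * π) ^ Fintype.card ι *
        ((if a = b then 1 else 0) * (if c = d then 1 else 0) +
          (if a = c then 1 else 0) * (if b = d then 1 else 0) +
          (if a = d then 1 else 0) * (if b = c then 1 else 0)) := by
  simp only [mul_mul_mul_eq_prod_pow_count, integral_prod_pow_mul_exp_neg_norm_sq_div_two,
    prod_stdGaussianMoment_count]

lemma integrable_mul_mul_mul_mul_exp_neg_norm_sq_div_two (a b c d : ι) :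
    Integrable fun Z : EuclideanSpace ℝ ι => Z a * Z b * Z c * Z d * exp (-‖Z‖ ^ 2 / 2) := by
  simpa only [mul_mul_mul_eq_prod_pow_count] using
    integrable_prod_pow_mul_exp_neg_norm_sq_div_two (ι := ι) _

lemma integrable_dotProduct_mul_mul_mul_exp_neg_norm_sq_div_two (u v w x : ι → ℝ) :
    Integrable fun Z : EuclideanSpace ℝ ι =>
      (u ⬝ᵥ Z) * (v ⬝ᵥ Z) * (w ⬝ᵥ Z) * (x ⬝ᵥ Z) * exp (-‖Z‖ ^ 2 / 2) := by
  simp only [dotProduct_mul_mul_mul_eq_sum, sum_mul, mul_assoc (u _ * v _ * w _ * x _)]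
  exact integrable_finsetSum _ fun a _ => integrable_finsetSum _ fun b _ =>
    integrable_finsetSum _ fun c _ => integrable_finsetSum _ fun d _ =>
      (integrable_mul_mul_mul_mul_exp_neg_norm_sq_div_two a b c d).const_mul _

theorem integral_dotProduct_mul_mul_mul_exp_neg_norm_sq_div_two (u v w x : ι → ℝ) :
    ∫ Z : EuclideanSpace ℝ ι, (u ⬝ᵥ Z) * (v ⬝ᵥ Z) * (w ⬝ᵥ Z) * (x ⬝ᵥ Z) * exp (-‖Z‖ ^ 2 / 2) =
      √(2 * π) ^ Fintype.card ι *
        ((u ⬝ᵥ v) * (w ⬝ᵥ x) + (u ⬝ᵥ w) * (v ⬝ᵥ x) + (u ⬝ᵥ x) * (v ⬝ᵥ w)) := by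
  simp only [dotProduct_mul_mul_mul_eq_sum, sum_mul, mul_assoc (u _ * v _ * w _ * x _)]
  rw [integral_sum_sum_sum_sum fun a b c d =>
    (integrable_mul_mul_mul_mul_exp_neg_norm_sq_div_two a b c d).const_mul _]
  simp only [integral_const_mul, integral_mul_mul_mul_mul_exp_neg_norm_sq_div_two]
  simp only [mul_left_comm (u _ * v _ * w _ * x _), ← mul_sum]
  congr 1
  simp only [mul_add, sum_add_distrib, mul_ite, mul_one, mul_zero, sum_ite_irrel, sum_const_zero,
    sum_ite_eq, mem_univ, if_true, dotProduct, sum_mul_sum]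
  simp only [← sum_add_distrib]
  congr! 2
  ring

end Isserlis

namespace Matrix
variable {ι : Type*} [Fintype ι] [DecidableEq ι] {J : Matrix ι ι ℝ}

lemma apply_eq_neg_apply_of_mul_self_eq_neg_one (hJ : Jᵀ * J = 1) (hJJ : J * J = -1) (i j : ι) :
    J i j = -J j i := by
  have hT : Jᵀ = -J :=
    calc Jᵀ = Jᵀ * -(J * J) := by rw [hJJ, neg_neg, mul_one]
      _ = -J := by rw [mul_neg, ← mul_assoc, hJ, one_mul]
  simpa using congrFun₂ hT j i

lemma sum_apply_mul_apply_of_transpose_mul_self_eq_one (hJ : Jᵀ * J = 1) (j l : ι) :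
    ∑ m, J j m * J l m = (1 : Matrix ι ι ℝ) j l := by
  rw [← mul_eq_one_comm.mp hJ, mul_apply]
  rfl

end Matrix

/- `R i j k l` stands for `R(eᵢ, eⱼ, eₖ, eₗ)` in the standard basis, and `Jeₖ = ∑ⱼ J j k • eⱼ`;
the lemma names spell out the contraction, e.g. `sum_R_ei_Jek_ek_Jei` is `∑ᵢₖ R(eᵢ, Jeₖ, eₖ, Jeᵢ)`. -/
section Curvature

variable {ι : Type*} [Fintype ι] [DecidableEq ι] {R : ι → ι → ι → ι → ℝ} {J : Matrix ι ι ℝ}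

lemma sum_J_mul_R_eq_neg_sum_J_mul_R (hJJ : J * J = -1)
    (h11 : ∀ i j k l, ∑ a, ∑ b, J a i * J b j * R a b k l = R i j k l) (i k p q : ι) :
    ∑ a, J a i * R a k p q = -∑ b, J b k * R i b p q :=
  calc ∑ a, J a i * R a k p q = ∑ a, ∑ c, ∑ b, J a i * (J c a * J b k * R c b p q) := by
        simp only [← mul_sum, h11]
    _ = ∑ c, ∑ b, (J * J) c i * J b k * R c b p q := by
        rw [sum_comm]
        refine sum_congr rfl fun c _ => ?_
        rw [sum_comm]
        simp only [mul_apply, sum_mul]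
        exact sum_congr rfl fun b _ => sum_congr rfl fun a _ => by ring
    _ = -∑ b, J b k * R i b p q := by
        simp [hJJ, one_apply, ite_mul, sum_neg_distrib]

lemma sum_R_Jei_ek_ei_Jek (hJ : Jᵀ * J = 1) (hJJ : J * J = -1)
    (h11 : ∀ i j k l, ∑ a, ∑ b, J a i * J b j * R a b k l = R i j k l) :
    ∑ i, ∑ j, ∑ k, ∑ l, R j k i l * J j i * J l k = -∑ j, ∑ k, R j k j k :=
  calc ∑ i, ∑ j, ∑ k, ∑ l, R j k i l * J j i * J l k
      = ∑ i, ∑ k, ∑ l, (∑ j, J j i * R j k i l) * J l k := by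
        refine sum_congr rfl fun i _ => ?_
        rw [← sum_comm_cycle]
        simp only [sum_mul, mul_comm (J _ i)]
    _ = -∑ i, ∑ b, ∑ l, R i b i l * ∑ k, J b k * J l k := by
        simp only [sum_J_mul_R_eq_neg_sum_J_mul_R hJJ h11, neg_mul, sum_neg_distrib, sum_mul,
          mul_sum]
        congr 1
        refine sum_congr rfl fun i _ => ?_
        rw [sum_comm_cycle]
        exact sum_congr rfl fun b _ => sum_comm.trans <|
          sum_congr rfl fun l _ => sum_congr rfl fun k _ => by ring
    _ = -∑ j, ∑ k, R j k j k := by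
        simp [sum_apply_mul_apply_of_transpose_mul_self_eq_one hJ, one_apply]

lemma sum_R_ei_Jei_ek_Jek (hasym : ∀ i j k l, R i j k l = -R j i k l)
    (hbianchi : ∀ i j k l, R i j k l + R j k i l + R k i j l = 0)
    (hJ : Jᵀ * J = 1) (hJJ : J * J = -1)
    (h11 : ∀ i j k l, ∑ a, ∑ b, J a i * J b j * R a b k l = R i j k l) :
    ∑ i, ∑ j, ∑ k, ∑ l, R i j k l * J j i * J l k = 2 * ∑ j, ∑ k, R j k j k := by
  have hJa := apply_eq_neg_apply_of_mul_self_eq_neg_one hJ hJJ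
  have hswap : ∑ i, ∑ j, ∑ k, ∑ l, R k i j l * J j i * J l k =
      ∑ i, ∑ j, ∑ k, ∑ l, R j k i l * J j i * J l k := by
    rw [sum_comm]
    congr! 4 with i _ j _ k _ l _
    rw [hasym k j i l, hJa i j]
    ring
  calc ∑ i, ∑ j, ∑ k, ∑ l, R i j k l * J j i * J l k
      = -(∑ i, ∑ j, ∑ k, ∑ l, R j k i l * J j i * J l k)
          - ∑ i, ∑ j, ∑ k, ∑ l, R k i j l * J j i * J l k := by
        simp only [← sum_neg_distrib, ← sum_sub_distrib]
        congr! 4 with i _ j _ k _ l _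
        rw [show R i j k l = -R j k i l - R k i j l by linarith [hbianchi i j k l]]
        ring
    _ = 2 * ∑ j, ∑ k, R j k j k := by
        rw [hswap, sum_R_Jei_ek_ei_Jek hJ hJJ h11]
        ring

lemma sum_R_ei_Jek_ek_Jei (hasym : ∀ i j k l, R i j k l = -R j i k l)
    (hbianchi : ∀ i j k l, R i j k l + R j k i l + R k i j l = 0)
    (hJ : Jᵀ * J = 1) (hJJ : J * J = -1)
    (h11 : ∀ i j k l, ∑ a, ∑ b, J a i * J b j * R a b k l = R i j k l) :
    ∑ i, ∑ j, ∑ k, ∑ l, R i j k l * J l i * J j k = ∑ j, ∑ k, R j k j k := by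
  have hJa := apply_eq_neg_apply_of_mul_self_eq_neg_one hJ hJJ
  have hfirst : ∑ i, ∑ j, ∑ k, ∑ l, R j k i l * J l i * J j k =
      -∑ i, ∑ j, ∑ k, ∑ l, R i j k l * J j i * J l k := by
    rw [← sum_comm_cycle]
    simp only [← sum_neg_distrib]
    congr! 4 with j _ k _ i _ l _
    rw [hJa j k]
    ring
  have hsecond : ∑ i, ∑ j, ∑ k, ∑ l, R k i j l * J l i * J j k = ∑ j, ∑ k, R j k j k := by
    rw [sum_comm]
    refine sum_congr rfl fun j _ => ?_
    rw [sum_comm_cycle]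
    refine sum_congr rfl fun l _ => sum_comm.trans ?_
    rw [← h11 j l j l]
    congr! 2 with k _ i _
    rw [hJa l i, hJa j k]
    ring
  calc ∑ i, ∑ j, ∑ k, ∑ l, R i j k l * J l i * J j k
      = -(∑ i, ∑ j, ∑ k, ∑ l, R j k i l * J l i * J j k)
          - ∑ i, ∑ j, ∑ k, ∑ l, R k i j l * J l i * J j k := by
        simp only [← sum_neg_distrib, ← sum_sub_distrib]
        congr! 4 with i _ j _ k _ l _
        rw [show R i j k l = -R j k i l - R k i j l by linarith [hbianchi i j k l]]
        ring
    _ = ∑ j, ∑ k, R j k j k := by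
        rw [hfirst, hsecond, sum_R_ei_Jei_ek_Jek hasym hbianchi hJ hJJ h11]
        ring

lemma sum_R_mul_wick_pairings (hasym : ∀ i j k l, R i j k l = -R j i k l)
    (hbianchi : ∀ i j k l, R i j k l + R j k i l + R k i j l = 0)
    (hJ : Jᵀ * J = 1) (hJJ : J * J = -1)
    (h11 : ∀ i j k l, ∑ a, ∑ b, J a i * J b j * R a b k l = R i j k l) :
    ∑ i, ∑ j, ∑ k, ∑ l, R i j k l *
        ((Pi.single i 1 ⬝ᵥ J j) * (Pi.single k 1 ⬝ᵥ J l) +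
          (Pi.single i 1 ⬝ᵥ Pi.single k 1) * (J j ⬝ᵥ J l) +
          (Pi.single i 1 ⬝ᵥ J l) * (J j ⬝ᵥ Pi.single k 1)) =
      4 * ∑ j, ∑ k, R j k j k := by
  simp only [single_dotProduct, dotProduct_single, one_mul, mul_one]
  simp only [dotProduct, sum_apply_mul_apply_of_transpose_mul_self_eq_one hJ, one_apply,
    Pi.single_apply, mul_add, sum_add_distrib, ← mul_assoc, mul_ite, mul_one, mul_zero,
    sum_ite_eq, sum_ite_eq', mem_univ, if_true]
  rw [sum_R_ei_Jei_ek_Jek hasym hbianchi hJ hJJ h11,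
    sum_R_ei_Jek_ek_Jei hasym hbianchi hJ hJJ h11]
  ring

end Curvature

theorem stmt_5_general (n : ℕ) (R : Fin (2 * n) → Fin (2 * n) → Fin (2 * n) → Fin (2 * n) → ℝ)
    (J : Matrix (Fin (2 * n)) (Fin (2 * n)) ℝ)
    (hasym1 : ∀ i j k l, R i j k l = - R j i k l)
    (hbianchi : ∀ i j k l, R i j k l + R j k i l + R k i j l = 0)
    (hJorth : J.transpose * J = 1)
    (hJsq : J * J = -1)
    (h11 : ∀ i j k l, (∑ a, ∑ b, J a i * J b j * R a b k l) = R i j k l) :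
    (∫ Z : EuclideanSpace ℝ (Fin (2 * n)),
        (∑ i, ∑ j, ∑ k, ∑ l,
            R i j k l * Z i * (∑ m, J j m * Z m) * Z k * (∑ m, J l m * Z m)) *
          Real.exp (-‖Z‖ ^ 2 / 2)) =
      -4 * (2 * Real.pi) ^ n * (-(∑ j, ∑ k, R j k j k)) := by
  have hZ (Z : EuclideanSpace ℝ (Fin (2 * n))) :
      (∑ i, ∑ j, ∑ k, ∑ l, R i j k l * Z i * (∑ m, J j m * Z m) * Z k * (∑ m, J l m * Z m)) *
          exp (-‖Z‖ ^ 2 / 2) =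
        ∑ i, ∑ j, ∑ k, ∑ l, R i j k l * ((Pi.single i 1 ⬝ᵥ Z) * (J j ⬝ᵥ Z) *
          (Pi.single k 1 ⬝ᵥ Z) * (J l ⬝ᵥ Z) * exp (-‖Z‖ ^ 2 / 2)) := by
    simp only [single_dotProduct, one_mul, sum_mul]
    congr! 4
    simp only [dotProduct]
    ring
  rw [integral_congr_ae (.of_forall hZ), integral_sum_sum_sum_sum fun i j k l =>
    (integrable_dotProduct_mul_mul_mul_exp_neg_norm_sq_div_two (Pi.single i 1) (J j)
      (Pi.single k 1) (J l)).const_mul (R i j k l)]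
  simp only [integral_const_mul, integral_dotProduct_mul_mul_mul_exp_neg_norm_sq_div_two]
  simp only [mul_left_comm (R _ _ _ _), ← mul_sum]
  rw [sum_R_mul_wick_pairings hasym1 hbianchi hJorth hJsq h11, Fintype.card_fin, pow_mul,
    sq_sqrt (by positivity)]
  ring

/-- Equation (0d13) of the paper: for a curvature-type tensor `R` (with the symmetries of a
Riemannian curvature tensor) of type (1,1) with respect to an orthogonal complex structure
`J` on `ℝ^{2n}`, the Gaussian integral of `⟨R(Z,JZ)Z,JZ⟩` equals `−4(2π)^n r`, where
`r = −Σ_{j,k}⟨R(e_j,e_k)e_j,e_k⟩`. Here `R i j k l = ⟨R(e_i,e_j)e_k,e_l⟩`. -/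
theorem stmt_5 (n : ℕ) (R : Fin (2 * n) → Fin (2 * n) → Fin (2 * n) → Fin (2 * n) → ℝ)
    (J : Matrix (Fin (2 * n)) (Fin (2 * n)) ℝ)
    (hasym1 : ∀ i j k l, R i j k l = - R j i k l)
    (hasym2 : ∀ i j k l, R i j k l = - R i j l k)
    (hpair : ∀ i j k l, R i j k l = R k l i j)
    (hbianchi : ∀ i j k l, R i j k l + R j k i l + R k i j l = 0)
    (hJorth : J.transpose * J = 1)
    (hJsq : J * J = -1)
    (h11 : ∀ i j k l, (∑ a, ∑ b, J a i * J b j * R a b k l) = R i j k l) :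
    (∫ Z : EuclideanSpace ℝ (Fin (2 * n)),
        (∑ i, ∑ j, ∑ k, ∑ l,
            R i j k l * Z i * (∑ m, J j m * Z m) * Z k * (∑ m, J l m * Z m)) *
          Real.exp (-‖Z‖ ^ 2 / 2)) =
      -4 * (2 * Real.pi) ^ n * (-(∑ j, ∑ k, R j k j k)) :=
  stmt_5_general n R J hasym1 hbianchi hJorth hJsq h11
end

section
/- Define P(Z, Z') = (det_ℂ 𝒥 / (2π)^n) · exp(−(1/4)⟨|𝒥|(Z−Z'), Z−Z'⟩ + (1/2)⟨𝒥 Z, Z'⟩) for Z, Z' ∈ ℝ^{2n}, where 𝒥 is a skew-adjoint invertible endomorphism of ℝ^{2n} with |𝒥| = (−𝒥²)^{1/2} and det_ℂ 𝒥 denotes the product of the positive eigenvalues a_j of |𝒥| (each counted once). Then P(0,0) = det_ℂ 𝒥 / (2π)^n, and P is a reproducing kernel: ∫_{ℝ^{2n}} P(Z, W) P(W, Z') dW = P(Z, Z'). -/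
open Finset MeasureTheory

open Matrix Complex

/-!
Write `P = K exp E` with `K = det_ℂ 𝒥 / (2π)^n`. As a function of `W`, `E(Z, W) + E(W, Z')` is a
quadratic polynomial with leading part `-½⟨|𝒥| W, W⟩` and linear coefficient
`c = ½ (|𝒥| (Z + Z') + i 𝒥 (Z - Z'))`, so `∫ P(Z, W) P(W, Z') dW` is a Gaussian integral. In an
orthonormal eigenbasis of `|𝒥|` it factors into one-dimensional ones and contributes
`(2π)^n / det_ℂ 𝒥 · exp(½⟨|𝒥|⁻¹ c, c⟩)`, and `K² (2π)^n / det_ℂ 𝒥 = K`. Since `|𝒥|`, the positive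
square root of `-𝒥²`, commutes with `𝒥`, we have `𝒥ᵀ |𝒥|⁻¹ 𝒥 = |𝒥|`; with this the completed
square `½⟨|𝒥|⁻¹ c, c⟩` turns the remaining terms back into `E(Z, Z')`.
-/

namespace Matrix

section CommRing

variable {ι R : Type*} [Fintype ι] [CommRing R]

lemma mulVec_dotProduct_comm_of_transpose_eq {M : Matrix ι ι R} (hM : Mᵀ = M) (x y : ι → R) :
    M *ᵥ x ⬝ᵥ y = M *ᵥ y ⬝ᵥ x := by
  rw [dotProduct_comm, dotProduct_mulVec, ← mulVec_transpose, hM]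

lemma mulVec_dotProduct_comm_of_transpose_eq_neg {M : Matrix ι ι R} (hM : Mᵀ = -M)
    (x y : ι → R) : M *ᵥ x ⬝ᵥ y = -(M *ᵥ y ⬝ᵥ x) := by
  rw [dotProduct_comm, dotProduct_mulVec, ← mulVec_transpose, hM, neg_mulVec, neg_dotProduct]

lemma mulVec_mulVec_dotProduct_mulVec (M U : Matrix ι ι R) (x : ι → R) :
    M *ᵥ (U *ᵥ x) ⬝ᵥ (U *ᵥ x) = (Uᵀ * M * U) *ᵥ x ⬝ᵥ x := by
  rw [dotProduct_mulVec, ← mulVec_transpose]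
  simp only [mulVec_mulVec, Matrix.mul_assoc]

lemma diagonal_mulVec_dotProduct [DecidableEq ι] (d x : ι → R) :
    diagonal d *ᵥ x ⬝ᵥ x = ∑ i, d i * x i ^ 2 := by
  simp only [dotProduct, mulVec_diagonal, sq, mul_assoc]

end CommRing

variable {ι : Type*} [Fintype ι]

lemma _root_.Complex.ofReal_comp_mulVec {κ : Type*} (M : Matrix κ ι ℝ) (v : ι → ℝ) :
    ofReal ∘ (M *ᵥ v) = M.map ofReal *ᵥ (ofReal ∘ v) :=
  funext (ofRealHom.map_mulVec M v)

lemma _root_.Complex.ofReal_dotProduct (v w : ι → ℝ) :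
    ((v ⬝ᵥ w : ℝ) : ℂ) = (ofReal ∘ v) ⬝ᵥ (ofReal ∘ w) :=
  ofRealHom.map_dotProduct v w

lemma map_ofReal_mul {κ μ : Type*} (M : Matrix κ ι ℝ) (N : Matrix ι μ ℝ) :
    (M * N).map ofReal = M.map ofReal * N.map ofReal :=
  Matrix.map_mul (f := ofRealHom)

variable [DecidableEq ι]

open scoped MatrixOrder ComplexOrder in
lemma PosSemidef.commute_of_commute_mul_self {𝕜 : Type*} [RCLike 𝕜] {A B : Matrix ι ι 𝕜}
    (hA : A.PosSemidef) (h : Commute (A * A) B) : Commute A B := by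
  rw [← CFC.sqrt_mul_self A hA.nonneg, CFC.sqrt_eq_cfc]
  exact h.cfc_nnreal _

lemma PosDef.transpose_mul_inv_mul_eq_of_mul_self_eq_neg {A J : Matrix ι ι ℝ} (hA : A.PosDef)
    (hJ : Jᵀ = -J) (h : A * A = -(J * J)) : Jᵀ * A⁻¹ * J = A := by
  have hAu : IsUnit A := (isUnit_iff_isUnit_det A).mpr hA.det_pos.ne'.isUnit
  have hcomm : Commute A⁻¹ J := by
    have hAJ : Commute (hAu.unit : Matrix ι ι ℝ) J := hA.posSemidef.commute_of_commute_mul_self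
      (h ▸ ((Commute.refl J).mul_left (Commute.refl J)).neg_left)
    simpa only [coe_units_inv, IsUnit.unit_spec] using hAJ.units_inv_left
  calc Jᵀ * A⁻¹ * J = A⁻¹ * -(J * J) := by
        rw [hJ, Matrix.neg_mul, ← hcomm.eq]
        noncomm_ring
    _ = A := by
        rw [← h, ← Matrix.mul_assoc, nonsing_inv_mul _ ((isUnit_iff_isUnit_det A).mp hAu),
          Matrix.one_mul]

lemma IsHermitian.ofLp_eigenvectorBasis_repr_symm {𝕜 : Type*} [RCLike 𝕜] {A : Matrix ι ι 𝕜}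
    (hA : A.IsHermitian) (v : EuclideanSpace 𝕜 ι) :
    (hA.eigenvectorBasis.repr.symm v).ofLp =
      (hA.eigenvectorUnitary : Matrix ι ι 𝕜) *ᵥ v.ofLp := by
  ext i
  rw [← hA.eigenvectorBasis.sum_repr_symm]
  simp [mulVec, dotProduct, mul_comm]

lemma IsHermitian.integral_comp_eigenvectorUnitary_mulVec {E : Type*} [NormedAddCommGroup E]
    [NormedSpace ℝ E] {A : Matrix ι ι ℝ} (hA : A.IsHermitian) (f : (ι → ℝ) → E) :
    ∫ w : EuclideanSpace ℝ ι, f w =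
      ∫ v : ι → ℝ, f ((hA.eigenvectorUnitary : Matrix ι ι ℝ) *ᵥ v) := by
  rw [← hA.eigenvectorBasis.measurePreserving_repr_symm.integral_comp
    hA.eigenvectorBasis.repr.symm.toHomeomorph.measurableEmbedding,
    ← (PiLp.volume_preserving_toLp ι).integral_comp (MeasurableEquiv.toLp 2 _).measurableEmbedding]
  simp only [hA.ofLp_eigenvectorBasis_repr_symm]

lemma IsHermitian.transpose_eigenvectorUnitary_mul_eigenvectorUnitary {A : Matrix ι ι ℝ}
    (hA : A.IsHermitian) :
    (hA.eigenvectorUnitary : Matrix ι ι ℝ)ᵀ * hA.eigenvectorUnitary = 1 := by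
  simpa [star_eq_conjTranspose] using Unitary.coe_star_mul_self hA.eigenvectorUnitary

lemma IsHermitian.eigenvectorUnitary_mul_transpose_eigenvectorUnitary {A : Matrix ι ι ℝ}
    (hA : A.IsHermitian) :
    (hA.eigenvectorUnitary : Matrix ι ι ℝ) * (hA.eigenvectorUnitary : Matrix ι ι ℝ)ᵀ = 1 := by
  simpa [star_eq_conjTranspose] using Unitary.coe_mul_star_self hA.eigenvectorUnitary

lemma IsHermitian.transpose_eigenvectorUnitary_mul_mul {A : Matrix ι ι ℝ} (hA : A.IsHermitian) :
    (hA.eigenvectorUnitary : Matrix ι ι ℝ)ᵀ * A * hA.eigenvectorUnitary =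
      diagonal hA.eigenvalues := by
  simpa [Unitary.conjStarAlgAut_apply, star_eq_conjTranspose] using
    hA.conjStarAlgAut_star_eigenvectorUnitary

lemma PosDef.transpose_eigenvectorUnitary_mul_inv_mul {A : Matrix ι ι ℝ} (hA : A.PosDef) :
    (hA.1.eigenvectorUnitary : Matrix ι ι ℝ)ᵀ * A⁻¹ * hA.1.eigenvectorUnitary =
      diagonal hA.1.eigenvalues⁻¹ := by
  have hU := hA.1.transpose_eigenvectorUnitary_mul_eigenvectorUnitary
  calc _ = ((hA.1.eigenvectorUnitary : Matrix ι ι ℝ)ᵀ * A * hA.1.eigenvectorUnitary)⁻¹ := by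
        rw [Matrix.mul_inv_rev, Matrix.mul_inv_rev, inv_eq_left_inv hU, inv_eq_right_inv hU,
          Matrix.mul_assoc]
    _ = _ := by
        rw [hA.1.transpose_eigenvectorUnitary_mul_mul, inv_eq_left_inv]
        rw [diagonal_mul_diagonal, ← diagonal_one]
        exact congrArg diagonal (funext fun i => inv_mul_cancel₀ (hA.eigenvalues_pos i).ne')

lemma PosDef.prod_sqrt_div_eigenvalues {A : Matrix ι ι ℝ} (hA : A.PosDef) {x : ℝ} (hx : 0 ≤ x) :
    ∏ i, √(x / hA.1.eigenvalues i) = √(x ^ Fintype.card ι / A.det) := by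
  rw [← Real.sqrt_prod _ fun i _ => div_nonneg hx (hA.eigenvalues_pos i).le,
    Finset.prod_div_distrib, Finset.prod_const, hA.1.det_eq_prod_eigenvalues]
  simp

lemma PosDef.map_ofReal_inv_mulVec_dotProduct {A : Matrix ι ι ℝ} (hA : A.PosDef) (c : ι → ℂ) :
    A⁻¹.map ofReal *ᵥ c ⬝ᵥ c = ∑ i, ((hA.1.eigenvalues i)⁻¹ : ℂ) *
      (((hA.1.eigenvectorUnitary : Matrix ι ι ℝ).map ofReal)ᵀ *ᵥ c) i ^ 2 := by
  set U : Matrix ι ι ℝ := (hA.1.eigenvectorUnitary : Matrix ι ι ℝ)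
  have hc : U.map ofReal *ᵥ ((U.map ofReal)ᵀ *ᵥ c) = c := by
    rw [mulVec_mulVec, ← transpose_map, ← map_ofReal_mul,
      hA.1.eigenvectorUnitary_mul_transpose_eigenvectorUnitary,
      Matrix.map_one _ ofReal_zero ofReal_one, one_mulVec]
  conv_lhs => rw [← hc]
  rw [mulVec_mulVec_dotProduct_mulVec, ← transpose_map, ← map_ofReal_mul, ← map_ofReal_mul,
    hA.transpose_eigenvectorUnitary_mul_inv_mul, diagonal_map ofReal_zero,
    diagonal_mulVec_dotProduct]
  simp

theorem PosDef.integral_cexp_neg_half_mulVec_dotProduct_add {A : Matrix ι ι ℝ} (hA : A.PosDef)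
    (c : ι → ℂ) :
    ∫ w : EuclideanSpace ℝ ι, cexp (-(1 / 2) * (A.map ofReal *ᵥ (ofReal ∘ w) ⬝ᵥ (ofReal ∘ w)) +
        c ⬝ᵥ (ofReal ∘ w)) =
      √((2 * Real.pi) ^ Fintype.card ι / A.det) * cexp (1 / 2 * (A⁻¹.map ofReal *ᵥ c ⬝ᵥ c)) := by
  rw [hA.map_ofReal_inv_mulVec_dotProduct, ← hA.prod_sqrt_div_eigenvalues Real.two_pi_pos.le]
  set U : Matrix ι ι ℝ := (hA.1.eigenvectorUnitary : Matrix ι ι ℝ)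
  set d := hA.1.eigenvalues
  set c' := (U.map ofReal)ᵀ *ᵥ c
  have hd : ∀ i, 0 < ((d i / 2 : ℝ) : ℂ).re := fun i => by simpa using hA.eigenvalues_pos i
  have hdiag : ∀ v : ι → ℝ,
      -(1 / 2) * (A.map ofReal *ᵥ (ofReal ∘ (U *ᵥ v)) ⬝ᵥ (ofReal ∘ (U *ᵥ v))) +
        c ⬝ᵥ (ofReal ∘ (U *ᵥ v)) =
      -∑ i, ((d i / 2 : ℝ) : ℂ) * (v i : ℂ) ^ 2 + ∑ i, c' i * v i := by
    intro v
    rw [ofReal_comp_mulVec, mulVec_mulVec_dotProduct_mulVec, dotProduct_mulVec,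
      ← mulVec_transpose, ← transpose_map, ← map_ofReal_mul, ← map_ofReal_mul,
      hA.1.transpose_eigenvectorUnitary_mul_mul, diagonal_map ofReal_zero,
      diagonal_mulVec_dotProduct, Finset.mul_sum, ← Finset.sum_neg_distrib]
    simp only [dotProduct, Function.comp_apply, ofReal_div, ofReal_ofNat, c']
    congr 1
    exact Finset.sum_congr rfl fun i _ => by ring
  rw [hA.1.integral_comp_eigenvectorUnitary_mulVec (fun x => cexp (-(1 / 2) *
      (A.map ofReal *ᵥ (ofReal ∘ x) ⬝ᵥ (ofReal ∘ x)) + c ⬝ᵥ (ofReal ∘ x)))]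
  refine (integral_congr_ae (.of_forall fun v => congrArg cexp (hdiag v))).trans ?_
  rw [GaussianFourier.integral_cexp_neg_sum_mul_add hd, Finset.prod_mul_distrib,
    ← Complex.exp_sum, ofReal_prod, Finset.mul_sum]
  congr 1
  · refine Finset.prod_congr rfl fun i _ => ?_
    have := hA.eigenvalues_pos i
    rw [show (Real.pi : ℂ) / ((d i / 2 : ℝ) : ℂ) = ((2 * Real.pi / d i : ℝ) : ℂ) by
        push_cast; field_simp, Real.sqrt_eq_rpow, ofReal_cpow (by positivity)]
    norm_num
  · refine congrArg cexp (Finset.sum_congr rfl fun i _ => ?_)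
    have : (d i : ℂ) ≠ 0 := ofReal_ne_zero.mpr (hA.eigenvalues_pos i).ne'
    push_cast
    field_simp
    ring

end Matrix

section BergmanExponent

variable {ι : Type*} [Fintype ι]

/-- The exponent `E` of the model kernel `P = K exp E`, on complexified `|𝒥|`, `𝒥`, `Z` and `Z'`. -/
noncomputable def bergmanExponent (A J : Matrix ι ι ℂ) (z z' : ι → ℂ) : ℂ :=
  -(1 / 4) * (A *ᵥ (z - z') ⬝ᵥ (z - z')) + 1 / 2 * I * (J *ᵥ z ⬝ᵥ z')

variable {A J : Matrix ι ι ℂ}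

lemma bergmanExponent_add_bergmanExponent (hA : Aᵀ = A) (hJ : Jᵀ = -J) (z w z' : ι → ℂ) :
    bergmanExponent A J z w + bergmanExponent A J w z' =
      -(1 / 4) * (A *ᵥ z ⬝ᵥ z + A *ᵥ z' ⬝ᵥ z') +
        (-(1 / 2) * (A *ᵥ w ⬝ᵥ w) + (1 / 2 : ℂ) • (A *ᵥ (z + z') + I • J *ᵥ (z - z')) ⬝ᵥ w) := by
  have hAs := mulVec_dotProduct_comm_of_transpose_eq hA
  have hJs := mulVec_dotProduct_comm_of_transpose_eq_neg hJ
  simp only [bergmanExponent, mulVec_add, mulVec_sub, add_dotProduct, sub_dotProduct,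
    dotProduct_sub, smul_dotProduct, smul_eq_mul]
  linear_combination (-(1 / 4) : ℂ) * (hAs z w + hAs z' w) + I / 2 * hJs w z'

lemma add_half_mulVec_dotProduct_eq_bergmanExponent [DecidableEq ι] {B : Matrix ι ι ℂ}
    (hBA : B * A = 1) (hB : Bᵀ = B) (hJBJ : Jᵀ * B * J = A) (hJ : Jᵀ = -J) (z z' : ι → ℂ) :
    -(1 / 4) * (A *ᵥ z ⬝ᵥ z + A *ᵥ z' ⬝ᵥ z') +
        1 / 2 * (B *ᵥ ((1 / 2 : ℂ) • (A *ᵥ (z + z') + I • J *ᵥ (z - z'))) ⬝ᵥ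
          ((1 / 2 : ℂ) • (A *ᵥ (z + z') + I • J *ᵥ (z - z')))) =
      bergmanExponent A J z z' := by
  set s := z + z'
  set d := z - z'
  have hBAs : B *ᵥ (A *ᵥ s) = s := by rw [mulVec_mulVec, hBA, one_mulVec]
  have h1 : B *ᵥ (A *ᵥ s) ⬝ᵥ (A *ᵥ s) = A *ᵥ s ⬝ᵥ s := by rw [hBAs, dotProduct_comm]
  have h2 : B *ᵥ (A *ᵥ s) ⬝ᵥ (J *ᵥ d) = J *ᵥ d ⬝ᵥ s := by rw [hBAs, dotProduct_comm]
  have h3 : B *ᵥ (J *ᵥ d) ⬝ᵥ (A *ᵥ s) = J *ᵥ d ⬝ᵥ s := by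
    rw [mulVec_dotProduct_comm_of_transpose_eq hB, h2]
  have h4 : B *ᵥ (J *ᵥ d) ⬝ᵥ (J *ᵥ d) = A *ᵥ d ⬝ᵥ d := by
    rw [mulVec_mulVec_dotProduct_mulVec, hJBJ]
  simp only [mulVec_smul, mulVec_add, smul_dotProduct, dotProduct_smul, add_dotProduct,
    dotProduct_add, h1, h2, h3, h4, smul_eq_mul]
  simp only [bergmanExponent, s, d, mulVec_add, mulVec_sub, add_dotProduct, sub_dotProduct,
    dotProduct_add, dotProduct_sub]
  have hJs := mulVec_dotProduct_comm_of_transpose_eq_neg hJ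
  linear_combination (A *ᵥ z ⬝ᵥ z + A *ᵥ z' ⬝ᵥ z' - A *ᵥ z' ⬝ᵥ z - A *ᵥ z ⬝ᵥ z') / 8 * I_sq -
    I / 4 * hJs z' z + I / 8 * hJs z z - I / 8 * hJs z' z'

end BergmanExponent

section ModelKernel

variable {ι : Type*} [Fintype ι]

lemma bergmanExponent_map_ofReal (A J : Matrix ι ι ℝ) (Z Z' : ι → ℝ) :
    bergmanExponent (A.map ofReal) (J.map ofReal) (ofReal ∘ Z) (ofReal ∘ Z') =
      ↑(-(1 / 4) * (A *ᵥ (Z - Z') ⬝ᵥ (Z - Z'))) + 1 / 2 * I * ↑(J *ᵥ Z ⬝ᵥ Z') := by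
  rw [bergmanExponent, ← ofReal_comp_sub, ← ofReal_comp_mulVec, ← ofReal_comp_mulVec,
    ← ofReal_dotProduct, ← ofReal_dotProduct]
  push_cast
  rfl

lemma Matrix.PosDef.add_half_inv_mulVec_dotProduct_eq_bergmanExponent [DecidableEq ι]
    {A J : Matrix ι ι ℝ} (hA : A.PosDef) (hJ : Jᵀ = -J) (h : A * A = -(J * J)) (z z' : ι → ℂ) :
    -(1 / 4) * (A.map ofReal *ᵥ z ⬝ᵥ z + A.map ofReal *ᵥ z' ⬝ᵥ z') +
        1 / 2 * (A⁻¹.map ofReal *ᵥ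
            ((1 / 2 : ℂ) • (A.map ofReal *ᵥ (z + z') + I • J.map ofReal *ᵥ (z - z'))) ⬝ᵥ
          ((1 / 2 : ℂ) • (A.map ofReal *ᵥ (z + z') + I • J.map ofReal *ᵥ (z - z')))) =
      bergmanExponent (A.map ofReal) (J.map ofReal) z z' := by
  refine add_half_mulVec_dotProduct_eq_bergmanExponent ?_ ?_ ?_ ?_ z z'
  · rw [← map_ofReal_mul, nonsing_inv_mul _ hA.det_pos.ne'.isUnit,
      Matrix.map_one _ ofReal_zero ofReal_one]
  · rw [← transpose_map, transpose_nonsing_inv, ← conjTranspose_eq_transpose_of_trivial, hA.1]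
  · rw [← transpose_map, ← map_ofReal_mul, ← map_ofReal_mul,
      hA.transpose_mul_inv_mul_eq_of_mul_self_eq_neg hJ h]
  · rw [← transpose_map, hJ, Matrix.map_neg _ ofReal_neg]

end ModelKernel

lemma sq_sqrt_div_pow_mul_sqrt_pow_div {D x : ℝ} (hD : 0 < D) (hx : 0 < x) (n : ℕ) :
    (√D / x ^ n) ^ 2 * √(x ^ (2 * n) / D) = √D / x ^ n := by
  rw [pow_mul', Real.sqrt_div' _ hD.le, Real.sqrt_sq (pow_pos hx n).le, div_pow]
  field_simp

theorem stmt_8_general (n : ℕ) (Jc absJ : Matrix (Fin (2 * n)) (Fin (2 * n)) ℝ)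
    (hskew : Jc.transpose = -Jc)
    (habs : absJ * absJ = -(Jc * Jc)) (hpos : absJ.PosDef)
    (P : EuclideanSpace ℝ (Fin (2 * n)) → EuclideanSpace ℝ (Fin (2 * n)) → ℂ)
    (hP : ∀ Z Z' : EuclideanSpace ℝ (Fin (2 * n)), P Z Z' =
      (↑(Real.sqrt absJ.det / (2 * Real.pi) ^ n) : ℂ) *
        Complex.exp
          ((↑(-(1 / 4) * ∑ i, (∑ j, absJ i j * (Z - Z') j) * (Z - Z') i) : ℂ) +
            (1 / 2) * Complex.I * (↑(∑ i, (∑ j, Jc i j * Z j) * Z' i) : ℂ))) :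
    P 0 0 = (↑(Real.sqrt absJ.det / (2 * Real.pi) ^ n) : ℂ) ∧
    ∀ Z Z' : EuclideanSpace ℝ (Fin (2 * n)),
      (∫ W : EuclideanSpace ℝ (Fin (2 * n)), P Z W * P W Z') = P Z Z' := by
  refine ⟨by simp [hP], fun Z Z' => ?_⟩
  set K : ℝ := √absJ.det / (2 * Real.pi) ^ n
  set A := absJ.map ofReal
  set J := Jc.map ofReal
  have hA : Aᵀ = A := by rw [← transpose_map, ← conjTranspose_eq_transpose_of_trivial, hpos.1]
  have hJ : Jᵀ = -J := by rw [← transpose_map, hskew, Matrix.map_neg _ ofReal_neg]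
  have hPexp : ∀ Z Z' : EuclideanSpace ℝ (Fin (2 * n)),
      P Z Z' = K * cexp (bergmanExponent A J (ofReal ∘ Z) (ofReal ∘ Z')) := fun Z Z' => by
    rw [hP, bergmanExponent_map_ofReal]
    rfl
  set z := ofReal ∘ Z.ofLp
  set z' := ofReal ∘ Z'.ofLp
  set c := (1 / 2 : ℂ) • (A *ᵥ (z + z') + I • J *ᵥ (z - z'))
  calc ∫ W, P Z W * P W Z'
      = ∫ W : EuclideanSpace ℝ (Fin (2 * n)),
          (K ^ 2 * cexp (-(1 / 4) * (A *ᵥ z ⬝ᵥ z + A *ᵥ z' ⬝ᵥ z'))) *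
            cexp (-(1 / 2) * (A *ᵥ (ofReal ∘ W) ⬝ᵥ (ofReal ∘ W)) + c ⬝ᵥ (ofReal ∘ W)) := by
        congr 1 with W
        rw [hPexp, hPexp, mul_mul_mul_comm, ← Complex.exp_add,
          bergmanExponent_add_bergmanExponent hA hJ, Complex.exp_add]
        ring
    _ = ((K ^ 2 * √((2 * Real.pi) ^ (2 * n) / absJ.det) : ℝ) : ℂ) *
          cexp (-(1 / 4) * (A *ᵥ z ⬝ᵥ z + A *ᵥ z' ⬝ᵥ z') +
            1 / 2 * (absJ⁻¹.map ofReal *ᵥ c ⬝ᵥ c)) := by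
        rw [integral_const_mul, hpos.integral_cexp_neg_half_mulVec_dotProduct_add,
          Fintype.card_fin, Complex.exp_add]
        push_cast
        ring
    _ = P Z Z' := by
        rw [hpos.add_half_inv_mulVec_dotProduct_eq_bergmanExponent hskew habs,
          sq_sqrt_div_pow_mul_sqrt_pow_div hpos.det_pos Real.two_pi_pos, hPexp]

/-- The model Bergman kernel (equation (ue62)):
`P(Z,Z') = (det_ℂ 𝒥/(2π)^n) exp(−(1/4)⟨|𝒥|(Z−Z'),Z−Z'⟩ + (1/2)⟨𝒥Z,Z'⟩)`, where `𝒥` is real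
skew-adjoint and invertible, `|𝒥| = (−𝒥²)^{1/2}`, `det_ℂ 𝒥 = √(det |𝒥|)` is the product of
the positive eigenvalues `a_j` of `|𝒥|`, and the skew term `⟨𝒥Z,Z'⟩` contributes a phase
(it enters with the factor `√−1` coming from `𝒥 = −2π√−1 𝐉`). Then `P(0,0) = det_ℂ 𝒥/(2π)^n`
and `P` is a reproducing kernel: `∫ P(Z,W)P(W,Z') dW = P(Z,Z')`. -/
theorem stmt_8 (n : ℕ) (Jc absJ : Matrix (Fin (2 * n)) (Fin (2 * n)) ℝ)
    (hskew : Jc.transpose = -Jc) (hinv : IsUnit Jc)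
    (habs : absJ * absJ = -(Jc * Jc)) (hpos : absJ.PosDef)
    (P : EuclideanSpace ℝ (Fin (2 * n)) → EuclideanSpace ℝ (Fin (2 * n)) → ℂ)
    (hP : ∀ Z Z' : EuclideanSpace ℝ (Fin (2 * n)), P Z Z' =
      (↑(Real.sqrt absJ.det / (2 * Real.pi) ^ n) : ℂ) *
        Complex.exp
          ((↑(-(1 / 4) * ∑ i, (∑ j, absJ i j * (Z - Z') j) * (Z - Z') i) : ℂ) +
            (1 / 2) * Complex.I * (↑(∑ i, (∑ j, Jc i j * Z j) * Z' i) : ℂ))) :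
    P 0 0 = (↑(Real.sqrt absJ.det / (2 * Real.pi) ^ n) : ℂ) ∧
    ∀ Z Z' : EuclideanSpace ℝ (Fin (2 * n)),
      (∫ W : EuclideanSpace ℝ (Fin (2 * n)), P Z W * P W Z') = P Z Z' :=
  stmt_8_general n Jc absJ hskew habs hpos P hP
end

section
/- Let θ(Z) = (θ^j_i(Z)) be a smooth family of invertible matrices on a ball in ℝ^{2n} with θ(0) = Id, satisfying the equations Σ_{|α|≥1}(|α|² + |α|)(∂^α θ^i_j)(0) Z^α/α! = ⟨R(Z, e_j)Z, e_i⟩ for a fixed curvature-type tensor R (bilinear antisymmetric in its two arguments), where the right side is evaluated with the frame fields ẽ_i determined by θ. Then the inverse matrix satisfies (θ^{-1})^i_j(Z) = δ_{ij} − (1/6)⟨R(Z, e_i)Z, e_j⟩ + O(|Z|³). -/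
open Finset Asymptotics Filter

private lemma coord_abs_le {m : ℕ} (Z : EuclideanSpace ℝ (Fin m)) (k : Fin m) :
    |Z k| ≤ ‖Z‖ := by
  rw [EuclideanSpace.norm_eq]
  have h1 : |Z k| = Real.sqrt (‖Z k‖ ^ 2) := by
    rw [Real.sqrt_sq_eq_abs, Real.norm_eq_abs, abs_abs]
  rw [h1]
  exact Real.sqrt_le_sqrt (Finset.single_le_sum (f := fun i => ‖Z i‖ ^ 2) (fun i _ => sq_nonneg _) (Finset.mem_univ k))

/-- Lemma 3.4 of the paper (equations (0c31), (0c32)): if the frame matrix `θ` is smooth,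
`θ(0) = Id`, and the Taylor expansion of `θ^i_j` to second order is
`δ_{ij} + (1/6)⟨R(Z,e_j)Z,e_i⟩` (with `R` a curvature-type tensor, antisymmetric in the
first two slots and with pair symmetry), then the inverse matrix satisfies
`(θ⁻¹)^i_j(Z) = δ_{ij} − (1/6)⟨R(Z,e_i)Z,e_j⟩ + O(|Z|³)`.
Here `R k i l j = ⟨R(e_k,e_i)e_l,e_j⟩`. -/
theorem stmt_10 (n : ℕ)
    (R : Fin (2 * n) → Fin (2 * n) → Fin (2 * n) → Fin (2 * n) → ℝ)
    (hasym : ∀ k l i j, R k l i j = - R l k i j)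
    (hpair : ∀ i j k l, R i j k l = R k l i j)
    (θ : EuclideanSpace ℝ (Fin (2 * n)) → Matrix (Fin (2 * n)) (Fin (2 * n)) ℝ)
    (hθ0 : θ 0 = 1)
    (hsmooth : ∀ i j, ContDiff ℝ (⊤ : ℕ∞) (fun Z => θ Z i j))
    (htaylor : ∀ i j,
      (fun Z : EuclideanSpace ℝ (Fin (2 * n)) =>
          θ Z i j - ((if i = j then (1 : ℝ) else 0) +
            (1 / 6) * ∑ k, ∑ l, Z k * Z l * R k j l i))
        =O[nhds 0] fun Z => ‖Z‖ ^ 3) :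
    ∀ i j,
      (fun Z : EuclideanSpace ℝ (Fin (2 * n)) =>
          (θ Z)⁻¹ i j - ((if i = j then (1 : ℝ) else 0) -
            (1 / 6) * ∑ k, ∑ l, Z k * Z l * R k i l j))
        =O[nhds 0] fun Z => ‖Z‖ ^ 3 := by
  intro i j
  set q : Fin (2 * n) → Fin (2 * n) → EuclideanSpace ℝ (Fin (2 * n)) → ℝ :=
    fun a b Z => (1 / 6) * ∑ k, ∑ l, Z k * Z l * R k b l a with hqdef
  -- symmetry of the quadratic form
  have hq_symm : ∀ a b Z, q a b Z = q b a Z := by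
    intro a b Z
    simp only [hqdef]
    congr 1
    rw [Finset.sum_comm]
    refine Finset.sum_congr rfl fun k _ => Finset.sum_congr rfl fun l _ => ?_
    rw [hpair l b k a]
    ring
  -- eventually ‖Z‖ ≤ 1
  have hZ1 : ∀ᶠ Z : EuclideanSpace ℝ (Fin (2 * n)) in nhds 0, ‖Z‖ ≤ 1 := by
    have := Metric.ball_mem_nhds (0 : EuclideanSpace ℝ (Fin (2 * n))) one_pos
    filter_upwards [this] with Z hZ
    simpa [dist_eq_norm] using le_of_lt (by simpa [dist_eq_norm] using hZ)
  -- ‖Z‖^2 * ‖Z‖^2 = O(‖Z‖^3)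
  have hO43 : (fun Z : EuclideanSpace ℝ (Fin (2 * n)) => ‖Z‖ ^ 2 * ‖Z‖ ^ 2)
      =O[nhds 0] fun Z => ‖Z‖ ^ 3 := by
    refine IsBigO.of_bound 1 ?_
    filter_upwards [hZ1] with Z hZ
    have h0 : (0:ℝ) ≤ ‖Z‖ := norm_nonneg _
    have : ‖Z‖ ^ 2 * ‖Z‖ ^ 2 = ‖Z‖ ^ 3 * ‖Z‖ := by ring
    rw [Real.norm_eq_abs, Real.norm_eq_abs, abs_of_nonneg (by positivity),
      abs_of_nonneg (by positivity), this, one_mul]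
    calc ‖Z‖ ^ 3 * ‖Z‖ ≤ ‖Z‖ ^ 3 * 1 := by
          exact mul_le_mul_of_nonneg_left hZ (by positivity)
      _ = ‖Z‖ ^ 3 := by ring
  -- ‖Z‖^3 = O(‖Z‖^2)
  have hO32 : (fun Z : EuclideanSpace ℝ (Fin (2 * n)) => ‖Z‖ ^ 3)
      =O[nhds 0] fun Z => ‖Z‖ ^ 2 := by
    refine IsBigO.of_bound 1 ?_
    filter_upwards [hZ1] with Z hZ
    have h0 : (0:ℝ) ≤ ‖Z‖ := norm_nonneg _
    rw [Real.norm_eq_abs, Real.norm_eq_abs, abs_of_nonneg (by positivity),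
      abs_of_nonneg (by positivity), one_mul]
    calc ‖Z‖ ^ 3 = ‖Z‖ ^ 2 * ‖Z‖ := by ring
      _ ≤ ‖Z‖ ^ 2 * 1 := mul_le_mul_of_nonneg_left hZ (by positivity)
      _ = ‖Z‖ ^ 2 := by ring
  -- q a b = O(‖Z‖^2)
  have hqO : ∀ a b, (fun Z => q a b Z) =O[nhds 0]
      fun Z : EuclideanSpace ℝ (Fin (2 * n)) => ‖Z‖ ^ 2 := by
    intro a b
    simp only [hqdef]
    refine IsBigO.const_mul_left ?_ _
    refine Asymptotics.IsBigO.fun_sum fun k _ => Asymptotics.IsBigO.fun_sum fun l _ => ?_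
    refine IsBigO.of_bound |R k b l a| (Eventually.of_forall fun Z => ?_)
    rw [Real.norm_eq_abs, Real.norm_eq_abs, abs_mul, abs_mul,
      abs_of_nonneg (sq_nonneg ‖Z‖)]
    have h1 := coord_abs_le Z k
    have h2 := coord_abs_le Z l
    calc |Z k| * |Z l| * |R k b l a| ≤ ‖Z‖ * ‖Z‖ * |R k b l a| := by
          exact mul_le_mul_of_nonneg_right
            (mul_le_mul h1 h2 (abs_nonneg _) (norm_nonneg _)) (abs_nonneg _)
      _ = |R k b l a| * ‖Z‖ ^ 2 := by ring
  -- Taylor hypothesis rewritten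
  have hE : ∀ a b, (fun Z => θ Z a b - ((if a = b then (1:ℝ) else 0) + q a b Z))
      =O[nhds 0] fun Z : EuclideanSpace ℝ (Fin (2 * n)) => ‖Z‖ ^ 3 := htaylor
  -- θ - δ = O(‖Z‖^2)
  have hθsub : ∀ a b, (fun Z => θ Z a b - (if a = b then (1:ℝ) else 0))
      =O[nhds 0] fun Z : EuclideanSpace ℝ (Fin (2 * n)) => ‖Z‖ ^ 2 := by
    intro a b
    have h := ((hE a b).trans hO32).add (hqO a b)
    have heq : (fun Z => θ Z a b - ((if a = b then (1:ℝ) else 0) + q a b Z) + q a b Z)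
        = fun Z => θ Z a b - (if a = b then (1:ℝ) else 0) := by
      funext Z; ring
    rwa [heq] at h
  -- continuity facts
  have hcont : Continuous θ := continuous_matrix fun a b => (hsmooth a b).continuous
  have hdetc : Continuous fun Z => (θ Z).det := hcont.matrix_det
  have hdet0 : (θ 0).det = 1 := by rw [hθ0]; simp
  have hdetne : ∀ᶠ Z : EuclideanSpace ℝ (Fin (2 * n)) in nhds 0, IsUnit (θ Z).det := by
    have h := hdetc.continuousAt.eventually_ne (x := (0 : EuclideanSpace ℝ (Fin (2 * n))))
      (y := (0:ℝ)) (by rw [hdet0]; norm_num)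
    filter_upwards [h] with Z hZ
    exact isUnit_iff_ne_zero.mpr hZ
  -- inverse entries are O(1)
  have hInvO : ∀ a b, (fun Z => (θ Z)⁻¹ a b) =O[nhds 0]
      (fun _ : EuclideanSpace ℝ (Fin (2 * n)) => (1:ℝ)) := by
    intro a b
    have heq : (fun Z => (θ Z)⁻¹ a b)
        = fun Z => ((θ Z).det)⁻¹ * (θ Z).adjugate a b := by
      funext Z
      rw [Matrix.inv_def, Ring.inverse_eq_inv', Matrix.smul_apply, smul_eq_mul]
    rw [heq]
    have hca : ContinuousAt (fun Z => ((θ Z).det)⁻¹ * (θ Z).adjugate a b) 0 := by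
      exact (hdetc.continuousAt.inv₀ (by rw [hdet0]; norm_num)).mul
        ((hcont.matrix_adjugate.matrix_elem a b).continuousAt)
    exact hca.tendsto.isBigO_one ℝ
  -- the "error column" is O(‖Z‖^3)
  have hG : ∀ m : Fin (2 * n),
      (fun Z => (if m = j then (1:ℝ) else 0) -
          ∑ p, θ Z m p * ((if p = j then (1:ℝ) else 0) - q j p Z))
        =O[nhds 0] fun Z : EuclideanSpace ℝ (Fin (2 * n)) => ‖Z‖ ^ 3 := by
    intro m
    have hid : (fun Z => (if m = j then (1:ℝ) else 0) -
          ∑ p, θ Z m p * ((if p = j then (1:ℝ) else 0) - q j p Z))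
        = fun Z => -(θ Z m j - ((if m = j then (1:ℝ) else 0) + q m j Z)) +
            ∑ p, (θ Z m p - (if m = p then (1:ℝ) else 0)) * q j p Z := by
      funext Z
      have h1 : ∑ p, θ Z m p * ((if p = j then (1:ℝ) else 0) - q j p Z)
          = θ Z m j - ∑ p, θ Z m p * q j p Z := by
        simp [mul_sub, Finset.sum_sub_distrib, mul_ite, mul_one, mul_zero,
          Finset.sum_ite_eq, Finset.sum_ite_eq']
      have h2 : ∑ p, (θ Z m p - (if m = p then (1:ℝ) else 0)) * q j p Z
          = (∑ p, θ Z m p * q j p Z) - q j m Z := by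
        simp [sub_mul, Finset.sum_sub_distrib, ite_mul, one_mul, zero_mul,
          Finset.sum_ite_eq, Finset.sum_ite_eq']
      rw [h1, h2, hq_symm j m]
      ring
    rw [hid]
    refine IsBigO.add ((hE m j).neg_left) ?_
    refine (Asymptotics.IsBigO.fun_sum fun p _ => ((hθsub m p).mul (hqO j p))).trans hO43
  -- main identity, valid where θ is invertible
  have hmain : ∀ᶠ Z : EuclideanSpace ℝ (Fin (2 * n)) in nhds 0,
      (θ Z)⁻¹ i j - ((if i = j then (1:ℝ) else 0) - q j i Z)
        = ∑ m, (θ Z)⁻¹ i m * ((if m = j then (1:ℝ) else 0) -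
            ∑ p, θ Z m p * ((if p = j then (1:ℝ) else 0) - q j p Z)) := by
    filter_upwards [hdetne] with Z hZ
    have hinv : (θ Z)⁻¹ * θ Z = 1 := Matrix.nonsing_inv_mul _ hZ
    have hip : ∀ p, ∑ m, (θ Z)⁻¹ i m * θ Z m p = if i = p then (1:ℝ) else 0 := by
      intro p
      have := congrFun (congrFun hinv i) p
      rw [Matrix.mul_apply] at this
      rw [this, Matrix.one_apply]
    have expand : ∑ m, (θ Z)⁻¹ i m * ((if m = j then (1:ℝ) else 0) -
          ∑ p, θ Z m p * ((if p = j then (1:ℝ) else 0) - q j p Z))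
        = (θ Z)⁻¹ i j - ∑ p, (if i = p then (1:ℝ) else 0) *
            ((if p = j then (1:ℝ) else 0) - q j p Z) := by
      have e1 : ∀ m : Fin (2 * n), (θ Z)⁻¹ i m * ((if m = j then (1:ℝ) else 0) -
            ∑ p, θ Z m p * ((if p = j then (1:ℝ) else 0) - q j p Z))
          = (θ Z)⁻¹ i m * (if m = j then (1:ℝ) else 0) -
            ∑ p, (θ Z)⁻¹ i m * (θ Z m p * ((if p = j then (1:ℝ) else 0) - q j p Z)) := by
        intro m; rw [mul_sub, Finset.mul_sum]
      rw [Finset.sum_congr rfl (fun m _ => e1 m), Finset.sum_sub_distrib, Finset.sum_comm]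
      have e2 : ∑ m, (θ Z)⁻¹ i m * (if m = j then (1:ℝ) else 0) = (θ Z)⁻¹ i j := by
        simp [mul_ite, mul_one, mul_zero]
      have e3 : ∀ p : Fin (2 * n),
          ∑ m, (θ Z)⁻¹ i m * (θ Z m p * ((if p = j then (1:ℝ) else 0) - q j p Z))
          = (if i = p then (1:ℝ) else 0) * ((if p = j then (1:ℝ) else 0) - q j p Z) := by
        intro p
        calc ∑ m, (θ Z)⁻¹ i m * (θ Z m p * ((if p = j then (1:ℝ) else 0) - q j p Z))
            = (∑ m, (θ Z)⁻¹ i m * θ Z m p) * ((if p = j then (1:ℝ) else 0) - q j p Z) := by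
              rw [Finset.sum_mul]
              exact Finset.sum_congr rfl fun m _ => (mul_assoc _ _ _).symm
          _ = (if i = p then (1:ℝ) else 0) * ((if p = j then (1:ℝ) else 0) - q j p Z) := by
              rw [hip p]
      rw [e2, Finset.sum_congr rfl (fun p _ => e3 p)]
    rw [expand]
    simp [ite_mul, one_mul, zero_mul]
  -- conclude
  have hsum : (fun Z => ∑ m, (θ Z)⁻¹ i m * ((if m = j then (1:ℝ) else 0) -
        ∑ p, θ Z m p * ((if p = j then (1:ℝ) else 0) - q j p Z)))
      =O[nhds 0] fun Z : EuclideanSpace ℝ (Fin (2 * n)) => ‖Z‖ ^ 3 := by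
    have h : (fun Z => ∑ m, (θ Z)⁻¹ i m * ((if m = j then (1:ℝ) else 0) -
          ∑ p, θ Z m p * ((if p = j then (1:ℝ) else 0) - q j p Z)))
        =O[nhds 0] fun Z : EuclideanSpace ℝ (Fin (2 * n)) => (1:ℝ) * ‖Z‖ ^ 3 :=
      Asymptotics.IsBigO.fun_sum fun m _ => (hInvO i m).mul (hG m)
    have heq : (fun Z : EuclideanSpace ℝ (Fin (2 * n)) => (1:ℝ) * ‖Z‖ ^ 3)
        = fun Z => ‖Z‖ ^ 3 := by funext Z; ring
    rwa [heq] at h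
  have hfinal := hsum.congr' (Filter.EventuallyEq.symm hmain) Filter.EventuallyEq.rfl
  exact hfinal
end
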